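/- arXiv:hep-th/0703124 — 14 statements merged into one kernel-verified Lean document; each statement's English description precedes it below -/
import Mathlib

section
/- Assume the Bethe equations hold. Then for every complex number z with z ∉ {μ_1, …, μ_M} ∪ {ε_1, …, ε_n}, the function S satisfies the Riccati equation: −Σ_{i=1}^M 1/(z − μ_i)² + S(z)² + (2/(ħ g²))((2z − ω)S(z) − 2M) = Σ_{j=1}^n 2 s_j (S(z) − S(ε_j))/(z − ε_j). (Here −Σ_i 1/(z − μ_i)² is the derivative S′(z).) -/
/-!
Write `u_i = 1/(z - μ_i)`. For `i ≠ k` the partial fraction identity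
`u_i u_k = u_i/(μ_i - μ_k) + u_k/(μ_k - μ_i)` turns the off-diagonal part of `S(z)² - Σ u_i²`
into `2 Σ_i u_i Σ_{k≠i} 1/(μ_i - μ_k)`, and the Bethe equations replace the inner sum by
`-a(μ_i)/ħ`. It remains to evaluate `Σ_i a(μ_i) u_i` term by term: the linear part of `a` gives
`((2z - ω) S(z) - 2M)/g²`, and each pole `ħ s_j/(λ - ε_j)` gives `ħ s_j (S(z) - S(ε_j))/(z - ε_j)`.
-/

open Finset

variable {K ι : Type*} [Field K] [Fintype ι]

theorem Finset.sum_sum_erase_comm [DecidableEq ι] {M : Type*} [AddCommMonoid M]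
    (f : ι → ι → M) :
    ∑ i, ∑ k ∈ univ.erase i, f i k = ∑ i, ∑ k ∈ univ.erase i, f k i :=
  Finset.sum_comm' fun i k => by simp [ne_comm]

theorem one_div_sub_mul_one_div_sub {z x y : K} (hx : z ≠ x) (hy : z ≠ y) (hxy : x ≠ y) :
    1 / (z - x) * (1 / (z - y)) = 1 / (z - x) / (x - y) + 1 / (z - y) / (y - x) := by
  field_simp [sub_ne_zero.2 hx, sub_ne_zero.2 hy, sub_ne_zero.2 hxy, sub_ne_zero.2 hxy.symm]
  ring

theorem sq_sum_one_div_sub [DecidableEq ι] {μ : ι → K} (hμ : Function.Injective μ) {z : K}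
    (hz : ∀ i, z ≠ μ i) :
    (∑ i, 1 / (z - μ i)) ^ 2
      = ∑ i, 1 / (z - μ i) ^ 2 + 2 * ∑ i, (∑ k ∈ univ.erase i, 1 / (μ i - μ k)) / (z - μ i) := by
  have hoff : ∀ i, ∀ k ∈ univ.erase i, 1 / (z - μ i) * (1 / (z - μ k))
      = 1 / (z - μ i) / (μ i - μ k) + 1 / (z - μ k) / (μ k - μ i) := fun i k hk =>
    one_div_sub_mul_one_div_sub (hz i) (hz k) (hμ.ne (ne_of_mem_erase hk).symm)
  calc (∑ i, 1 / (z - μ i)) ^ 2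
      = ∑ i, (1 / (z - μ i) * (1 / (z - μ i))
          + ∑ k ∈ univ.erase i, 1 / (z - μ i) * (1 / (z - μ k))) := by
        rw [sq, sum_mul_sum]
        exact sum_congr rfl fun i _ => (add_sum_erase _ _ (mem_univ i)).symm
    _ = ∑ i, 1 / (z - μ i) ^ 2 + 2 * ∑ i, (∑ k ∈ univ.erase i, 1 / (μ i - μ k)) / (z - μ i) := by
        rw [sum_add_distrib, sum_congr rfl fun i _ => sum_congr rfl (hoff i)]
        simp only [sum_add_distrib]
        rw [← Finset.sum_sum_erase_comm (fun i k => 1 / (z - μ i) / (μ i - μ k))]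
        congr 1
        · simp only [one_div, sq, mul_inv]
        · simp only [two_mul, sum_div, div_right_comm (1 : K)]

theorem sum_mul_sub_div_sub (c d : K) {μ : ι → K} {z : K} (hz : ∀ i, z ≠ μ i) :
    ∑ i, (c * μ i - d) / (z - μ i)
      = (c * z - d) * ∑ i, 1 / (z - μ i) - c * Fintype.card ι := by
  have hterm : ∀ i, (c * μ i - d) / (z - μ i) = (c * z - d) * (1 / (z - μ i)) - c := fun i => by
    field_simp [sub_ne_zero.2 (hz i)]
    ring
  simp only [hterm, sum_sub_distrib, ← mul_sum, sum_const, card_univ, nsmul_eq_mul, mul_comm]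

theorem sum_one_div_mul_sub {μ : ι → K} {z w : K} (hz : ∀ i, z ≠ μ i) (hw : ∀ i, w ≠ μ i)
    (hzw : z ≠ w) :
    ∑ i, 1 / ((μ i - w) * (z - μ i))
      = (∑ i, 1 / (z - μ i) - ∑ i, 1 / (w - μ i)) / (z - w) := by
  rw [← sum_sub_distrib, sum_div]
  refine sum_congr rfl fun i _ => ?_
  field_simp [sub_ne_zero.2 (hz i), sub_ne_zero.2 (hw i), sub_ne_zero.2 (hw i).symm,
    sub_ne_zero.2 hzw]
  ring

theorem sum_potential_div_sub {ν : Type*} [Fintype ν] (hbar c ω : K) (ε s : ν → K)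
    {μ : ι → K} (hμε : ∀ i j, μ i ≠ ε j) {z : K} (hzμ : ∀ i, z ≠ μ i) (hzε : ∀ j, z ≠ ε j) :
    ∑ i, ((2 * μ i - ω) / c - ∑ j, hbar * s j / (μ i - ε j)) / (z - μ i)
      = ((2 * z - ω) * ∑ i, 1 / (z - μ i) - 2 * Fintype.card ι) / c
        - hbar * ∑ j, s j * ((∑ i, 1 / (z - μ i) - ∑ i, 1 / (ε j - μ i)) / (z - ε j)) := by
  have hsplit : ∀ i, ((2 * μ i - ω) / c - ∑ j, hbar * s j / (μ i - ε j)) / (z - μ i)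
      = (2 * μ i - ω) / (z - μ i) / c - ∑ j, hbar * s j / (μ i - ε j) / (z - μ i) := fun i => by
    rw [sub_div, div_right_comm, sum_div]
  rw [sum_congr rfl fun i _ => hsplit i, sum_sub_distrib, ← sum_div,
    sum_mul_sub_div_sub 2 ω hzμ, mul_sum _ _ hbar, sum_comm]
  congr 1
  refine sum_congr rfl fun j _ => ?_
  rw [← sum_one_div_mul_sub hzμ (fun i => (hμε i j).symm) (hzε j), mul_sum, mul_sum]
  refine sum_congr rfl fun i _ => ?_
  rw [div_div]
  ring

theorem riccati_from_bethe_general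
    (n M : ℕ) (hbar g ω : ℂ) (hhbar : hbar ≠ 0)
    (ε : Fin n → ℂ) (s : Fin n → ℂ)
    (μ : Fin M → ℂ) (hμ : Function.Injective μ)
    (hμε : ∀ i j, μ i ≠ ε j)
    (a S : ℂ → ℂ)
    (ha : ∀ z, a z = (2 * z - ω) / g ^ 2 - ∑ j, hbar * s j / (z - ε j))
    (hS : ∀ z, S z = ∑ i, 1 / (z - μ i))
    (bethe : ∀ i, a (μ i) + ∑ k ∈ Finset.univ.erase i, hbar / (μ i - μ k) = 0)
    (z : ℂ) (hzμ : ∀ i, z ≠ μ i) (hzε : ∀ j, z ≠ ε j) :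
    -∑ i, 1 / (z - μ i) ^ 2 + (S z) ^ 2
        + (2 / (hbar * g ^ 2)) * ((2 * z - ω) * S z - 2 * M)
      = ∑ j, 2 * s j * (S z - S (ε j)) / (z - ε j) := by
  have hbethe : ∀ i, ∑ k ∈ univ.erase i, 1 / (μ i - μ k) = -a (μ i) / hbar := fun i => by
    rw [eq_div_iff hhbar, sum_mul, eq_neg_iff_add_eq_zero, ← bethe i, add_comm]
    simp only [one_div_mul_eq_div]
  have hweighted : ∑ i, a (μ i) / (z - μ i)
      = ((2 * z - ω) * S z - 2 * M) / g ^ 2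
        - hbar * ∑ j, s j * ((S z - S (ε j)) / (z - ε j)) := by
    simpa only [ha, hS, Fintype.card_fin] using sum_potential_div_sub hbar (g ^ 2) ω ε s hμε hzμ hzε
  have hsq : S z ^ 2 = ∑ i, 1 / (z - μ i) ^ 2 + 2 * (-∑ i, a (μ i) / (z - μ i)) / hbar := by
    rw [hS, sq_sum_one_div_sub hμ hzμ]
    simp only [hbethe, neg_div, div_right_comm _ hbar, sum_neg_distrib, sum_div, mul_div_assoc]
  have hrhs : ∑ j, 2 * s j * (S z - S (ε j)) / (z - ε j)
      = 2 * ∑ j, s j * ((S z - S (ε j)) / (z - ε j)) := by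
    rw [mul_sum]
    exact sum_congr rfl fun j _ => by ring
  rw [hsq, hweighted, hrhs]
  field_simp
  ring

/-- The Bethe equations imply the Riccati equation for
`S(z) = Σ_i 1/(z - μ_i)`. -/
theorem riccati_from_bethe
    (n M : ℕ) (hbar g ω : ℂ) (hhbar : hbar ≠ 0) (hg : g ≠ 0)
    (ε : Fin n → ℂ) (hε : Function.Injective ε) (s : Fin n → ℂ)
    (μ : Fin M → ℂ) (hμ : Function.Injective μ)
    (hμε : ∀ i j, μ i ≠ ε j)
    (a S : ℂ → ℂ)
    (ha : ∀ z, a z = (2 * z - ω) / g ^ 2 - ∑ j, hbar * s j / (z - ε j))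
    (hS : ∀ z, S z = ∑ i, 1 / (z - μ i))
    (bethe : ∀ i, a (μ i) + ∑ k ∈ Finset.univ.erase i, hbar / (μ i - μ k) = 0)
    (z : ℂ) (hzμ : ∀ i, z ≠ μ i) (hzε : ∀ j, z ≠ ε j) :
    -∑ i, 1 / (z - μ i) ^ 2 + (S z) ^ 2
        + (2 / (hbar * g ^ 2)) * ((2 * z - ω) * S z - 2 * M)
      = ∑ j, 2 * s j * (S z - S (ε j)) / (z - ε j) :=
  riccati_from_bethe_general n M hbar g ω hhbar ε s μ hμ hμε a S ha hS bethe z hzμ hzε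
end

section
/- Assume all spins equal one half, s_j = 1/2 for j = 1, …, n, and assume the Bethe equations hold. Then for every i = 1, …, n: S(ε_i)² + (2/(ħ g²))((2ε_i − ω)S(ε_i) − 2M) = Σ_{j≠i} (S(ε_i) − S(ε_j))/(ε_i − ε_j). -/
open BigOperators Finset

/-! Write `f k = (ε_i - μ_k)⁻¹`, so `S(ε_i) = ∑ f k`. In `S(ε_i)²` the cross terms
`f k * f l` split by partial fractions into `2 ∑ₖ f k ∑_{l ≠ k} (μ_k - μ_l)⁻¹`, and the Bethe
equations replace the inner sum by `-a(μ_k)/ħ`. For spins one half, `a(μ_k) f k` is again a sum of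
simple fractions: the linear part of `a` gives `(2ε_i - ω) S(ε_i) - 2M`, the pole at `ε_i`
cancels the diagonal `∑ f k²`, and each other pole `ε_j` gives the divided difference of `S`
between `ε_i` and `ε_j`. -/

namespace Finset

theorem sum_sum_erase_comm_s2 {ι M : Type*} [Fintype ι] [DecidableEq ι] [AddCommMonoid M]
    (G : ι → ι → M) :
    ∑ k, ∑ l ∈ univ.erase k, G k l = ∑ k, ∑ l ∈ univ.erase k, G l k :=
  sum_comm' fun k l => by simp [ne_comm, and_comm]

theorem sq_sum_eq_sum_sq_add_sum_sum_erase {ι R : Type*} [Fintype ι] [DecidableEq ι]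
    [CommSemiring R] (f : ι → R) :
    (∑ k, f k) ^ 2 = ∑ k, f k ^ 2 + ∑ k, ∑ l ∈ univ.erase k, f k * f l := by
  rw [sq, sum_mul_sum, ← sum_add_distrib]
  refine sum_congr rfl fun k _ => ?_
  rw [sq, add_sum_erase _ (fun l => f k * f l) (mem_univ k)]

end Finset

section CauchySums

variable {K ι : Type*} [Field K] [Fintype ι]

theorem sum_linear_mul_inv_sub (μ : ι → K) (α β z : K) (hz : ∀ k, μ k ≠ z) :
    ∑ k, (α * μ k - β) * (z - μ k)⁻¹ = (α * z - β) * ∑ k, (z - μ k)⁻¹ - α * Fintype.card ι := by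
  have hterm : ∀ k, (α * μ k - β) * (z - μ k)⁻¹ = (α * z - β) * (z - μ k)⁻¹ - α := fun k => by
    have := sub_ne_zero.mpr (hz k).symm
    field_simp
    ring
  simp only [hterm, sum_sub_distrib, ← mul_sum, sum_const, card_univ, nsmul_eq_mul]
  ring

theorem inv_sub_mul_inv_sub {x z w : K} (hzw : z ≠ w) (hxz : x ≠ z) (hxw : x ≠ w) :
    (z - x)⁻¹ * (x - w)⁻¹ = ((z - x)⁻¹ - (w - x)⁻¹) / (z - w) := by
  have := sub_ne_zero.mpr hzw
  have := sub_ne_zero.mpr hxw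
  have := sub_ne_zero.mpr hxz.symm
  field_simp
  ring

theorem sum_inv_sub_mul_inv_sub (μ : ι → K) {z w : K} (hzw : z ≠ w) (hz : ∀ k, μ k ≠ z)
    (hw : ∀ k, μ k ≠ w) :
    ∑ k, (z - μ k)⁻¹ * (μ k - w)⁻¹ = (∑ k, (z - μ k)⁻¹ - ∑ k, (w - μ k)⁻¹) / (z - w) := by
  simp only [inv_sub_mul_inv_sub hzw (hz _) (hw _), ← sum_div, sum_sub_distrib]

theorem sum_sum_inv_sub_mul_inv_sub {κ : Type*} [Fintype κ] [DecidableEq κ] (μ : ι → K)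
    (ε : κ → K) (hε : Function.Injective ε) (hμε : ∀ k j, μ k ≠ ε j) (i : κ) :
    ∑ k, ∑ j, (ε i - μ k)⁻¹ * (μ k - ε j)⁻¹ = -∑ k, ((ε i - μ k)⁻¹) ^ 2
      + ∑ j ∈ univ.erase i, (∑ k, (ε i - μ k)⁻¹ - ∑ k, (ε j - μ k)⁻¹) / (ε i - ε j) := by
  rw [sum_comm, ← add_sum_erase _ _ (mem_univ i), ← sum_neg_distrib]
  congr 1
  · exact sum_congr rfl fun k _ => by rw [← neg_sub, inv_neg]; ring
  · exact sum_congr rfl fun j hj =>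
      sum_inv_sub_mul_inv_sub μ (hε.ne (ne_of_mem_erase hj)).symm (hμε · i) (hμε · j)

variable [DecidableEq ι]

theorem sq_sum_inv_sub (μ : ι → K) (hμ : Function.Injective μ) {z : K} (hz : ∀ k, μ k ≠ z) :
    (∑ k, (z - μ k)⁻¹) ^ 2 = ∑ k, ((z - μ k)⁻¹) ^ 2
      + 2 * ∑ k, (∑ l ∈ univ.erase k, (μ k - μ l)⁻¹) * (z - μ k)⁻¹ := by
  -- the two summands are exchanged by `k ↔ l`, so the cross terms add up to twice the first
  have hpair : ∀ k, ∀ l ∈ univ.erase k, (z - μ k)⁻¹ * (z - μ l)⁻¹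
      = (μ k - μ l)⁻¹ * (z - μ k)⁻¹ + (μ l - μ k)⁻¹ * (z - μ l)⁻¹ := fun k l hl => by
    have := sub_ne_zero.mpr (hμ.ne (ne_of_mem_erase hl))
    have := sub_ne_zero.mpr (hμ.ne (ne_of_mem_erase hl)).symm
    have := sub_ne_zero.mpr (hz k).symm
    have := sub_ne_zero.mpr (hz l).symm
    field_simp
    ring
  rw [sq_sum_eq_sum_sq_add_sum_sum_erase, sum_congr rfl fun k _ => sum_congr rfl (hpair k)]
  simp only [sum_add_distrib]
  rw [← sum_sum_erase_comm_s2 (fun k l => (μ k - μ l)⁻¹ * (z - μ k)⁻¹)]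
  simp only [sum_mul]
  ring

end CauchySums

/-- for spins one half, the Bethe equations imply the closed
algebraic equations for `S(ε_i)`. -/
theorem closed_equations_spin_half
    (n M : ℕ) (hbar g ω : ℂ) (hhbar : hbar ≠ 0) (hg : g ≠ 0)
    (ε : Fin n → ℂ) (hε : Function.Injective ε) (s : Fin n → ℂ)
    (hs : ∀ j, s j = 1 / 2)
    (μ : Fin M → ℂ) (hμ : Function.Injective μ)
    (hμε : ∀ i j, μ i ≠ ε j)
    (a S : ℂ → ℂ)
    (ha : ∀ z, a z = (2 * z - ω) / g ^ 2 - ∑ j, hbar * s j / (z - ε j))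
    (hS : ∀ z, S z = ∑ i, 1 / (z - μ i))
    (bethe : ∀ i, a (μ i) + ∑ k ∈ Finset.univ.erase i, hbar / (μ i - μ k) = 0) :
    ∀ i, (S (ε i)) ^ 2 + (2 / (hbar * g ^ 2)) * ((2 * ε i - ω) * S (ε i) - 2 * M)
      = ∑ j ∈ Finset.univ.erase i, (S (ε i) - S (ε j)) / (ε i - ε j) := by
  intro i
  have hS' : ∀ z, S z = ∑ k, (z - μ k)⁻¹ := by simpa only [one_div] using hS
  have hT : ∀ k, hbar * ∑ l ∈ univ.erase k, (μ k - μ l)⁻¹ = -a (μ k) := fun k => by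
    rw [mul_sum]
    simp only [← div_eq_mul_inv]
    linear_combination bethe k
  have ha' : ∀ k, a (μ k) = (2 * μ k - ω) / g ^ 2 - hbar / 2 * ∑ j, (μ k - ε j)⁻¹ := fun k => by
    rw [ha, mul_sum]
    exact congrArg _ (sum_congr rfl fun j _ => by rw [hs]; ring)
  have hweighted : hbar * ∑ k, (∑ l ∈ univ.erase k, (μ k - μ l)⁻¹) * (ε i - μ k)⁻¹
      = -(∑ k, (2 * μ k - ω) * (ε i - μ k)⁻¹) / g ^ 2
        + hbar / 2 * ∑ k, ∑ j, (ε i - μ k)⁻¹ * (μ k - ε j)⁻¹ := by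
    rw [mul_sum, mul_sum, ← sum_neg_distrib, sum_div, ← sum_add_distrib]
    refine sum_congr rfl fun k _ => ?_
    rw [← mul_assoc, hT, ha', ← mul_sum]
    ring
  have hsq := sq_sum_inv_sub μ hμ (hμε · i)
  have hlin := sum_linear_mul_inv_sub μ 2 ω (ε i) (hμε · i)
  have hpair := sum_sum_inv_sub_mul_inv_sub μ ε hε hμε i
  simp only [hS']
  rw [Fintype.card_fin] at hlin
  linear_combination (norm := (field_simp; ring)) hsq + 2 / hbar * hweighted + hpair
    - 2 / (hbar * g ^ 2) * hlin
end

section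
/- Assume the Bethe equations hold with s_j = d_j/2 where d_1, …, d_n are natural numbers. For each fixed index i, define H_i(y) = (∏_{j=1}^n (y − ε_j)^{d_j}) · exp(−(2/(ħ g²))(y² − ω y)) / ∏_{k≠i} (y − μ_k)². Then H_i is complex differentiable at μ_i and H_i′(μ_i) = 0; i.e. the double pole of the integrand ∏_j (y − ε_j)^{2 s_j} e^{−(2/(ħ g²))(y² − ω y)} / ∏_m (y − μ_m)² at y = μ_i has vanishing residue (trivial monodromy of the second solution). -/
open BigOperators Finset

/-!
Write the integrand as `H = P · E / Q` with `P = ∏ (y - ε_j)^{d_j}`, `E` the exponential and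
`Q = ∏_{k ≠ i} (y - μ_k)²`. Each factor has an explicit logarithmic derivative, so
`H'(μ_i) = H(μ_i) · (∑ d_j/(μ_i - ε_j) - (2/(ħ g²))(2μ_i - ω) - ∑_{k≠i} 2/(μ_i - μ_k))`,
and the bracket is `-2/ħ` times the left-hand side of the Bethe equation at `μ_i`.
-/

section LogDeriv

variable {𝕜 : Type*} [NontriviallyNormedField 𝕜]

theorem hasDerivAt_prod_sub_pow {ι : Type*} [DecidableEq ι] (s : Finset ι) (ε : ι → 𝕜)
    (d : ι → ℕ) {x : 𝕜} (hx : ∀ j ∈ s, x ≠ ε j) :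
    HasDerivAt (fun y => ∏ j ∈ s, (y - ε j) ^ d j)
      ((∏ j ∈ s, (x - ε j) ^ d j) * ∑ j ∈ s, (d j : 𝕜) / (x - ε j)) x := by
  have hfactor (j : ι) : HasDerivAt (fun y => (y - ε j) ^ d j)
      ((d j : 𝕜) * (x - ε j) ^ (d j - 1)) x := by
    simpa using ((hasDerivAt_id x).sub_const (ε j)).fun_pow (d j)
  refine (HasDerivAt.fun_finsetProd fun j _ => hfactor j).congr_deriv ?_
  rw [mul_sum]
  refine sum_congr rfl fun j hj => ?_
  have hxj : x - ε j ≠ 0 := sub_ne_zero.mpr (hx j hj)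
  rw [smul_eq_mul, ← prod_erase_mul _ _ hj]
  cases d j with
  | zero => simp
  | succ m =>
    rw [Nat.add_sub_cancel, pow_succ]
    field_simp

theorem HasDerivAt.mul_div_of_logDeriv {f g h : 𝕜 → 𝕜} {a b c x : 𝕜}
    (hf : HasDerivAt f (f x * a) x) (hg : HasDerivAt g (g x * b) x)
    (hh : HasDerivAt h (h x * c) x) (hx : h x ≠ 0) :
    HasDerivAt (fun y => f y * g y / h y) (f x * g x / h x * (a + b - c)) x := by
  refine ((hf.fun_mul hg).fun_div hh hx).congr_deriv ?_
  field_simp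

end LogDeriv

theorem bethe_logDeriv_eq_zero {ι κ : Type*} [Fintype ι] {hbar g ω c : ℂ} (hhbar : hbar ≠ 0)
    (ε : ι → ℂ) (d : ι → ℕ) (t : Finset κ) (μ : κ → ℂ)
    (hbethe : (2 * c - ω) / g ^ 2 - ∑ j, hbar * ((d j : ℂ) / 2) / (c - ε j)
      + ∑ k ∈ t, hbar / (c - μ k) = 0) :
    ∑ j, (d j : ℂ) / (c - ε j) + -(2 / (hbar * g ^ 2)) * (2 * c - ω)
      - ∑ k ∈ t, 2 / (c - μ k) = 0 := by
  have hε : ∑ j, hbar * ((d j : ℂ) / 2) / (c - ε j) = hbar / 2 * ∑ j, (d j : ℂ) / (c - ε j) := by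
    rw [mul_sum]
    exact sum_congr rfl fun j _ => by ring
  have hμ : ∑ k ∈ t, hbar / (c - μ k) = hbar / 2 * ∑ k ∈ t, 2 / (c - μ k) := by
    rw [mul_sum]
    exact sum_congr rfl fun k _ => by ring
  rw [hε, hμ] at hbethe
  generalize ∑ j, (d j : ℂ) / (c - ε j) = A at *
  generalize ∑ k ∈ t, 2 / (c - μ k) = B at *
  linear_combination (-2 / hbar) * hbethe - (A - B) * mul_inv_cancel₀ hhbar

theorem trivial_monodromy_residue_general
    (n M : ℕ) (hbar g ω : ℂ) (hhbar : hbar ≠ 0)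
    (ε : Fin n → ℂ)
    (d : Fin n → ℕ) (s : Fin n → ℂ) (hs : ∀ j, s j = (d j : ℂ) / 2)
    (μ : Fin M → ℂ) (hμ : Function.Injective μ)
    (hμε : ∀ i j, μ i ≠ ε j)
    (a : ℂ → ℂ)
    (ha : ∀ z, a z = (2 * z - ω) / g ^ 2 - ∑ j, hbar * s j / (z - ε j))
    (bethe : ∀ i, a (μ i) + ∑ k ∈ Finset.univ.erase i, hbar / (μ i - μ k) = 0)
    (i : Fin M) :
    HasDerivAt (fun y : ℂ =>
        (∏ j, (y - ε j) ^ (d j)) * Complex.exp (-(2 / (hbar * g ^ 2)) * (y ^ 2 - ω * y))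
          / ∏ k ∈ Finset.univ.erase i, (y - μ k) ^ 2)
      0 (μ i) := by
  have hμμ : ∀ k ∈ univ.erase i, μ i ≠ μ k := fun k hk => (hμ.ne (ne_of_mem_erase hk)).symm
  have hP := hasDerivAt_prod_sub_pow univ ε d fun j _ => hμε i j
  have hQ := hasDerivAt_prod_sub_pow (univ.erase i) μ (fun _ => 2) hμμ
  have hE : HasDerivAt (fun y => Complex.exp (-(2 / (hbar * g ^ 2)) * (y ^ 2 - ω * y)))
      (Complex.exp (-(2 / (hbar * g ^ 2)) * (μ i ^ 2 - ω * μ i))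
        * (-(2 / (hbar * g ^ 2)) * (2 * μ i - ω))) (μ i) := by
    have hquad := (hasDerivAt_pow 2 (μ i)).sub ((hasDerivAt_id (μ i)).const_mul ω)
    simpa using (hquad.const_mul (-(2 / (hbar * g ^ 2)))).cexp
  have hQ0 : ∏ k ∈ univ.erase i, (μ i - μ k) ^ 2 ≠ 0 :=
    prod_ne_zero_iff.mpr fun k hk => pow_ne_zero _ (sub_ne_zero.mpr (hμμ k hk))
  have hlog := bethe_logDeriv_eq_zero (g := g) (ω := ω) (c := μ i) hhbar ε d (univ.erase i) μ
    (by simpa only [ha, hs] using bethe i)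
  refine (hP.mul_div_of_logDeriv hE hQ hQ0).congr_deriv ?_
  rw [Nat.cast_ofNat, hlog, mul_zero]

/-- trivial monodromy: under the Bethe equations with
`s_j = d_j/2`, the integrand of the second solution, with the double pole at
`μ_i` removed, has vanishing derivative at `μ_i`; i.e. the residue of the
double pole vanishes. -/
theorem trivial_monodromy_residue
    (n M : ℕ) (hbar g ω : ℂ) (hhbar : hbar ≠ 0) (hg : g ≠ 0)
    (ε : Fin n → ℂ) (hε : Function.Injective ε)
    (d : Fin n → ℕ) (s : Fin n → ℂ) (hs : ∀ j, s j = (d j : ℂ) / 2)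
    (μ : Fin M → ℂ) (hμ : Function.Injective μ)
    (hμε : ∀ i j, μ i ≠ ε j)
    (a : ℂ → ℂ)
    (ha : ∀ z, a z = (2 * z - ω) / g ^ 2 - ∑ j, hbar * s j / (z - ε j))
    (bethe : ∀ i, a (μ i) + ∑ k ∈ Finset.univ.erase i, hbar / (μ i - μ k) = 0)
    (i : Fin M) :
    HasDerivAt (fun y : ℂ =>
        (∏ j, (y - ε j) ^ (d j)) * Complex.exp (-(2 / (hbar * g ^ 2)) * (y ^ 2 - ω * y))
          / ∏ k ∈ Finset.univ.erase i, (y - μ k) ^ 2)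
      0 (μ i) :=
  trivial_monodromy_residue_general n M hbar g ω hhbar ε d s hs μ hμ hμε a ha bethe i
end

section
/- Assume the Bethe equations hold, and define y(z) = a(z) + ħ S(z) on the complement of {μ_1, …, μ_M} ∪ {ε_1, …, ε_n}. Then for every z in this complement the Riccati form of Baxter's equation holds: ħ·y′(z) + y(z)² = Λ(z), where Λ(z) = a(z)² + ħ a′(z) + 4ħM/g² − 2ħ² Σ_{j=1}^n s_j S(ε_j)/(z − ε_j), with a′(z) = 2/g² + Σ_j ħ s_j/(z − ε_j)² and y′(z) = a′(z) − ħ Σ_i 1/(z − μ_i)². -/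
open BigOperators Finset

/-- under the Bethe equations, `y(z) = a(z) + ħ S(z)` satisfies the
Riccati form of Baxter's equation `ħ y'(z) + y(z)² = Λ(z)`. -/
theorem riccati_baxter
    (n M : ℕ) (hbar g ω : ℂ) (hhbar : hbar ≠ 0) (hg : g ≠ 0)
    (ε : Fin n → ℂ) (hε : Function.Injective ε) (s : Fin n → ℂ)
    (μ : Fin M → ℂ) (hμ : Function.Injective μ)
    (hμε : ∀ i j, μ i ≠ ε j)
    (a a' S y Λ : ℂ → ℂ)
    (ha : ∀ z, a z = (2 * z - ω) / g ^ 2 - ∑ j, hbar * s j / (z - ε j))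
    (ha' : ∀ z, a' z = 2 / g ^ 2 + ∑ j, hbar * s j / (z - ε j) ^ 2)
    (hS : ∀ z, S z = ∑ i, 1 / (z - μ i))
    (hy : ∀ z, y z = a z + hbar * S z)
    (hΛ : ∀ z, Λ z = (a z) ^ 2 + hbar * a' z + 4 * hbar * M / g ^ 2
      - 2 * hbar ^ 2 * ∑ j, s j * S (ε j) / (z - ε j))
    (bethe : ∀ i, a (μ i) + ∑ k ∈ Finset.univ.erase i, hbar / (μ i - μ k) = 0)
    (z : ℂ) (hzμ : ∀ i, z ≠ μ i) (hzε : ∀ j, z ≠ ε j) :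
    hbar * (a' z - hbar * ∑ i, 1 / (z - μ i) ^ 2) + (y z) ^ 2 = Λ z := by
  have hzμ' : ∀ i, z - μ i ≠ 0 := fun i => sub_ne_zero.mpr (hzμ i)
  have hzε' : ∀ j, z - ε j ≠ 0 := fun j => sub_ne_zero.mpr (hzε j)
  have hμε' : ∀ i j, μ i - ε j ≠ 0 := fun i j => sub_ne_zero.mpr (hμε i j)
  have hμμ : ∀ i k : Fin M, k ≠ i → μ i - μ k ≠ 0 := fun i k h =>
    sub_ne_zero.mpr (fun e => h (hμ e.symm))
  set T : ℂ := ∑ i, (1 / (z - μ i)) * ∑ k ∈ Finset.univ.erase i, 1 / (μ i - μ k) with hT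
  -- swap lemma
  have swap : ∀ f : Fin M → Fin M → ℂ,
      ∑ i, ∑ k ∈ Finset.univ.erase i, f i k = ∑ k, ∑ i ∈ Finset.univ.erase k, f i k := by
    intro f
    exact Finset.sum_comm' (by
      intro x y
      simp only [Finset.mem_univ, Finset.mem_erase, true_and, and_true]
      exact ⟨fun h => (Ne.symm h), fun h => (Ne.symm h)⟩)
  -- F1 : S z ^ 2 - ∑ 1/(z-μ i)^2 = 2 T
  have F1 : (S z) ^ 2 - (∑ i, 1 / (z - μ i) ^ 2) = 2 * T := by
    have e1 : (S z) ^ 2 = (∑ i, 1 / (z - μ i) ^ 2)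
        + ∑ i, ∑ k ∈ Finset.univ.erase i, (1 / (z - μ i)) * (1 / (z - μ k)) := by
      rw [hS, sq, Finset.sum_mul_sum, ← Finset.sum_add_distrib]
      refine Finset.sum_congr rfl fun i _ => ?_
      rw [← Finset.add_sum_erase _ _ (Finset.mem_univ i)]
      congr 1
      rw [div_mul_div_comm, one_mul, ← sq]
    have e2 : ∀ i : Fin M, ∀ k ∈ Finset.univ.erase i, (1 / (z - μ i)) * (1 / (z - μ k))
        = (1 / (μ i - μ k)) * (1 / (z - μ i)) + (1 / (μ k - μ i)) * (1 / (z - μ k)) := by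
      intro i k hk
      have hki : k ≠ i := (Finset.mem_erase.mp hk).1
      have h1 := hμμ i k hki
      have h2 := hμμ k i (Ne.symm hki)
      have h3 := hzμ' i
      have h4 := hzμ' k
      field_simp
      ring
    have e3 : ∑ i, ∑ k ∈ Finset.univ.erase i, (1 / (μ k - μ i)) * (1 / (z - μ k))
        = ∑ i, ∑ k ∈ Finset.univ.erase i, (1 / (μ i - μ k)) * (1 / (z - μ i)) :=
      swap (fun i k => (1 / (μ k - μ i)) * (1 / (z - μ k)))
    have e4 : T = ∑ i, ∑ k ∈ Finset.univ.erase i, (1 / (μ i - μ k)) * (1 / (z - μ i)) := by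
      rw [hT]
      exact Finset.sum_congr rfl fun i _ => by
        rw [Finset.mul_sum]
        exact Finset.sum_congr rfl fun k _ => mul_comm _ _
    rw [e1, Finset.sum_congr rfl fun i _ => Finset.sum_congr rfl (e2 i),
      Finset.sum_congr rfl fun i _ => Finset.sum_add_distrib, Finset.sum_add_distrib, e3, e4]
    ring
  -- F2 : hbar * T = - ∑ a (μ i) / (z - μ i)
  have F2 : hbar * T = -∑ i, a (μ i) * (1 / (z - μ i)) := by
    rw [hT, Finset.mul_sum, ← Finset.sum_neg_distrib]
    refine Finset.sum_congr rfl fun i _ => ?_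
    have hb := bethe i
    have hrw : ∑ k ∈ Finset.univ.erase i, hbar / (μ i - μ k)
        = hbar * ∑ k ∈ Finset.univ.erase i, 1 / (μ i - μ k) := by
      rw [Finset.mul_sum]
      exact Finset.sum_congr rfl fun k _ => (mul_one_div _ _).symm
    rw [hrw] at hb
    linear_combination (1 / (z - μ i)) * hb
  -- C : pointwise difference identity
  have hC : ∀ i, a z - a (μ i)
      = (z - μ i) * (2 / g ^ 2 + hbar * ∑ j, s j / ((z - ε j) * (μ i - ε j))) := by
    intro i
    have e1 : (2 * z - ω) / g ^ 2 - (2 * μ i - ω) / g ^ 2 = (z - μ i) * (2 / g ^ 2) := by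
      field_simp
      ring
    have e2 : (∑ j, hbar * s j / (μ i - ε j)) - ∑ j, hbar * s j / (z - ε j)
        = (z - μ i) * (hbar * ∑ j, s j / ((z - ε j) * (μ i - ε j))) := by
      rw [← Finset.sum_sub_distrib, Finset.mul_sum, Finset.mul_sum]
      refine Finset.sum_congr rfl fun j _ => ?_
      have h1 := hzε' j
      have h2 := hμε' i j
      field_simp
      ring
    rw [ha z, ha (μ i)]
    linear_combination e1 + e2
  -- F3
  have F3 : a z * S z - ∑ i, a (μ i) * (1 / (z - μ i))
      = 2 * M / g ^ 2 - hbar * ∑ j, s j * S (ε j) / (z - ε j) := by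
    have e1 : a z * S z - ∑ i, a (μ i) * (1 / (z - μ i))
        = ∑ i, (a z - a (μ i)) * (1 / (z - μ i)) := by
      rw [hS, Finset.mul_sum, ← Finset.sum_sub_distrib]
      exact Finset.sum_congr rfl fun i _ => by ring
    have e2 : ∀ i : Fin M, (a z - a (μ i)) * (1 / (z - μ i))
        = 2 / g ^ 2 + hbar * ∑ j, s j / ((z - ε j) * (μ i - ε j)) := by
      intro i
      rw [hC i, mul_one_div, mul_div_cancel_left₀ _ (hzμ' i)]
    have e3 : ∀ j : Fin n, ∑ i, s j / ((z - ε j) * (μ i - ε j))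
        = -(s j * S (ε j) / (z - ε j)) := by
      intro j
      rw [hS (ε j), Finset.mul_sum, Finset.sum_div, ← Finset.sum_neg_distrib]
      refine Finset.sum_congr rfl fun i _ => ?_
      have h1 := hzε' j
      have h2 := hμε' i j
      have h3 : ε j - μ i ≠ 0 := sub_ne_zero.mpr fun e => hμε i j e.symm
      field_simp
      ring
    rw [e1, Finset.sum_congr rfl fun i _ => e2 i, Finset.sum_add_distrib,
      Finset.sum_const, Finset.card_univ, Fintype.card_fin, ← Finset.mul_sum,
      Finset.sum_comm, Finset.sum_congr rfl fun j (_ : j ∈ Finset.univ) => e3 j,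
      Finset.sum_neg_distrib]
    rw [nsmul_eq_mul]
    ring
  rw [hy z, hΛ z]
  linear_combination hbar ^ 2 * F1 + 2 * hbar * F2 + 2 * hbar * F3
end

section
/- For all complex numbers λ ≠ μ, both outside {ε_1, …, ε_n}, the following commutation relations hold: [A(λ), B(μ)] = (ħ/(λ − μ))(B(λ) − B(μ)); [A(λ), C(μ)] = −(ħ/(λ − μ))(C(λ) − C(μ)); [B(λ), C(μ)] = (2ħ/(λ − μ))(A(λ) − A(μ)); and moreover [A(λ), A(μ)] = 0, [B(λ), B(μ)] = 0, [C(λ), C(μ)] = 0. -/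
open BigOperators Finset

section BrkHelpers
variable {V : Type*} [AddCommGroup V] [Module ℂ V]

def brk (X Y : Module.End ℂ V) : Module.End ℂ V := X * Y - Y * X

lemma brk_of_commute {X Y : Module.End ℂ V} (h : Commute X Y) : brk X Y = 0 := by
  simp [brk, h.eq]

lemma brk_self (X : Module.End ℂ V) : brk X X = 0 := by simp [brk]

lemma brk_smul_smul (a c : ℂ) (X Y : Module.End ℂ V) :
    brk (a • X) (c • Y) = (a * c) • brk X Y := by
  simp only [brk, smul_mul_assoc, mul_smul_comm, smul_smul, smul_sub]
  rw [mul_comm c a]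

lemma brk_add_left (X Y Z : Module.End ℂ V) :
    brk (X + Y) Z = brk X Z + brk Y Z := by
  simp only [brk, add_mul, mul_add]; abel

lemma brk_add_right (X Y Z : Module.End ℂ V) :
    brk X (Y + Z) = brk X Y + brk X Z := by
  simp only [brk, add_mul, mul_add]; abel

lemma brk_sum_left {ι : Type*} (s : Finset ι) (f : ι → Module.End ℂ V)
    (Z : Module.End ℂ V) : brk (∑ i ∈ s, f i) Z = ∑ i ∈ s, brk (f i) Z := by
  simp only [brk, Finset.sum_mul, Finset.mul_sum, ← Finset.sum_sub_distrib]

lemma brk_sum_right {ι : Type*} (s : Finset ι) (f : ι → Module.End ℂ V)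
    (Z : Module.End ℂ V) : brk Z (∑ i ∈ s, f i) = ∑ i ∈ s, brk Z (f i) := by
  simp only [brk, Finset.sum_mul, Finset.mul_sum, ← Finset.sum_sub_distrib]

lemma brk_key {n : ℕ} (c d : ℂ) (T1 T2 : Module.End ℂ V)
    (a e : Fin n → ℂ) (S R : Fin n → Module.End ℂ V)
    (h1R : ∀ j, Commute T1 (R j)) (h2S : ∀ j, Commute (S j) T2)
    (hSR : ∀ j k, j ≠ k → Commute (S j) (R k)) :
    brk (c • T1 + ∑ j, a j • S j) (d • T2 + ∑ j, e j • R j)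
      = (c * d) • brk T1 T2 + ∑ j, (a j * e j) • brk (S j) (R j) := by
  rw [brk_add_left, brk_add_right, brk_add_right, brk_smul_smul]
  have h1 : brk (c • T1) (∑ j, e j • R j) = 0 := by
    rw [brk_sum_right]
    refine Finset.sum_eq_zero fun j _ => ?_
    rw [brk_smul_smul, brk_of_commute (h1R j), smul_zero]
  have h2 : brk (∑ j, a j • S j) (d • T2) = 0 := by
    rw [brk_sum_left]
    refine Finset.sum_eq_zero fun j _ => ?_
    rw [brk_smul_smul, brk_of_commute (h2S j), smul_zero]
  have hd : brk (∑ j, a j • S j) (∑ j, e j • R j)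
      = ∑ j, (a j * e j) • brk (S j) (R j) := by
    rw [brk_sum_left]
    refine Finset.sum_congr rfl fun j _ => ?_
    rw [brk_sum_right, Finset.sum_eq_single_of_mem j (Finset.mem_univ j)
      (fun k _ hk => by rw [brk_smul_smul, brk_of_commute (hSR j k hk.symm), smul_zero]),
      brk_smul_smul]
  rw [h1, h2, hd]
  abel

lemma inv_mul_split (x y z : ℂ) (hxy : x - y ≠ 0) (hx : x - z ≠ 0) (hy : y - z ≠ 0) :
    (x - z)⁻¹ * (y - z)⁻¹ = (x - y)⁻¹ * ((y - z)⁻¹ - (x - z)⁻¹) := by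
  have h1 : (y - z)⁻¹ - (x - z)⁻¹ = (x - y) / ((y - z) * (x - z)) := by
    rw [inv_sub_inv hy hx]
    congr 1
    ring
  rw [h1, div_eq_mul_inv, ← mul_assoc, inv_mul_cancel₀ hxy, one_mul, mul_inv]
  exact mul_comm _ _

end BrkHelpers




open BigOperators Finset

/-- commutation relations of the Lax matrix entries
`A(λ), B(λ), C(λ)` of the Jaynes-Cummings-Gaudin model. -/
theorem lax_commutation_relations
    (V : Type*) [AddCommGroup V] [Module ℂ V]
    (n : ℕ) (hbar g ω : ℂ) (hhbar : hbar ≠ 0) (hg : g ≠ 0)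
    (ε : Fin n → ℂ) (hε : Function.Injective ε)
    (b bdag : Module.End ℂ V) (sz sp sm : Fin n → Module.End ℂ V)
    (hosc : b * bdag - bdag * b = hbar • (1 : Module.End ℂ V))
    (hpm : ∀ j, sp j * sm j - sm j * sp j = (2 * hbar) • sz j)
    (hzp : ∀ j, sz j * sp j - sp j * sz j = hbar • sp j)
    (hzm : ∀ j, sz j * sm j - sm j * sz j = (-hbar) • sm j)
    (hsites : ∀ j k, j ≠ k →
      ∀ X ∈ ({sz j, sp j, sm j} : Set (Module.End ℂ V)),
      ∀ Y ∈ ({sz k, sp k, sm k} : Set (Module.End ℂ V)), Commute X Y)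
    (hbspin : ∀ j, ∀ X ∈ ({sz j, sp j, sm j} : Set (Module.End ℂ V)),
      Commute b X ∧ Commute bdag X)
    (A B C : ℂ → Module.End ℂ V)
    (hA : ∀ lam, (∀ j, lam ≠ ε j) →
      A lam = ((2 * lam - ω) / g ^ 2) • (1 : Module.End ℂ V)
        + ∑ j, (lam - ε j)⁻¹ • sz j)
    (hB : ∀ lam, (∀ j, lam ≠ ε j) →
      B lam = (2 / g) • b + ∑ j, (lam - ε j)⁻¹ • sm j)
    (hC : ∀ lam, (∀ j, lam ≠ ε j) →
      C lam = (2 / g) • bdag + ∑ j, (lam - ε j)⁻¹ • sp j) :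
    ∀ lam mu : ℂ, lam ≠ mu → (∀ j, lam ≠ ε j) → (∀ j, mu ≠ ε j) →
      (A lam * B mu - B mu * A lam = (hbar / (lam - mu)) • (B lam - B mu))
      ∧ (A lam * C mu - C mu * A lam = (-(hbar / (lam - mu))) • (C lam - C mu))
      ∧ (B lam * C mu - C mu * B lam = (2 * hbar / (lam - mu)) • (A lam - A mu))
      ∧ (A lam * A mu - A mu * A lam = 0)
      ∧ (B lam * B mu - B mu * B lam = 0)
      ∧ (C lam * C mu - C mu * C lam = 0) := by
  intro lam mu hne hl hm
  have hlm : lam - mu ≠ 0 := sub_ne_zero.mpr hne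
  have hle : ∀ j, lam - ε j ≠ 0 := fun j => sub_ne_zero.mpr (hl j)
  have hme : ∀ j, mu - ε j ≠ 0 := fun j => sub_ne_zero.mpr (hm j)
  have mz : ∀ j, sz j ∈ ({sz j, sp j, sm j} : Set (Module.End ℂ V)) := fun j => by simp
  have mp : ∀ j, sp j ∈ ({sz j, sp j, sm j} : Set (Module.End ℂ V)) := fun j => by simp
  have mm : ∀ j, sm j ∈ ({sz j, sp j, sm j} : Set (Module.End ℂ V)) := fun j => by simp
  refine ⟨?_, ?_, ?_, ?_, ?_, ?_⟩
  · -- [A(λ), B(μ)]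
    have key : brk (((2 * lam - ω) / g ^ 2) • (1 : Module.End ℂ V) + ∑ j, (lam - ε j)⁻¹ • sz j)
        ((2 / g) • b + ∑ j, (mu - ε j)⁻¹ • sm j)
        = ((2 * lam - ω) / g ^ 2 * (2 / g)) • brk 1 b
          + ∑ j, ((lam - ε j)⁻¹ * (mu - ε j)⁻¹) • brk (sz j) (sm j) :=
      brk_key _ _ _ _ _ _ _ _ (fun j => Commute.one_left _)
        (fun j => ((hbspin j _ (mz j)).1).symm)
        (fun j k h => hsites j k h _ (mz j) _ (mm k))
    calc A lam * B mu - B mu * A lam = brk (A lam) (B mu) := rfl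
      _ = _ := by
          rw [hA lam hl, hB mu hm, key, brk_of_commute (Commute.one_left b), smul_zero,
            zero_add, hB lam hl, add_sub_add_left_eq_sub,
            ← Finset.sum_sub_distrib]
          simp only [← sub_smul]
          rw [Finset.smul_sum]
          refine Finset.sum_congr rfl fun j _ => ?_
          rw [show brk (sz j) (sm j) = (-hbar) • sm j from hzm j, smul_smul, smul_smul]
          congr 1
          rw [inv_mul_split lam mu (ε j) hlm (hle j) (hme j), div_eq_mul_inv]
          ring
  · -- [A(λ), C(μ)]
    have key : brk (((2 * lam - ω) / g ^ 2) • (1 : Module.End ℂ V) + ∑ j, (lam - ε j)⁻¹ • sz j)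
        ((2 / g) • bdag + ∑ j, (mu - ε j)⁻¹ • sp j)
        = ((2 * lam - ω) / g ^ 2 * (2 / g)) • brk 1 bdag
          + ∑ j, ((lam - ε j)⁻¹ * (mu - ε j)⁻¹) • brk (sz j) (sp j) :=
      brk_key _ _ _ _ _ _ _ _ (fun j => Commute.one_left _)
        (fun j => ((hbspin j _ (mz j)).2).symm)
        (fun j k h => hsites j k h _ (mz j) _ (mp k))
    calc A lam * C mu - C mu * A lam = brk (A lam) (C mu) := rfl
      _ = _ := by
          rw [hA lam hl, hC mu hm, key, brk_of_commute (Commute.one_left bdag), smul_zero,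
            zero_add, hC lam hl, add_sub_add_left_eq_sub,
            ← Finset.sum_sub_distrib]
          simp only [← sub_smul]
          rw [Finset.smul_sum]
          refine Finset.sum_congr rfl fun j _ => ?_
          rw [show brk (sz j) (sp j) = hbar • sp j from hzp j, smul_smul, smul_smul]
          congr 1
          rw [inv_mul_split lam mu (ε j) hlm (hle j) (hme j), div_eq_mul_inv]
          ring
  · -- [B(λ), C(μ)]
    have hbc : ∀ j, brk (sm j) (sp j) = (-(2 * hbar)) • sz j := by
      intro j
      show sm j * sp j - sp j * sm j = _
      rw [← neg_sub, hpm j, neg_smul]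
    have key : brk ((2 / g) • b + ∑ j, (lam - ε j)⁻¹ • sm j)
        ((2 / g) • bdag + ∑ j, (mu - ε j)⁻¹ • sp j)
        = (2 / g * (2 / g)) • brk b bdag
          + ∑ j, ((lam - ε j)⁻¹ * (mu - ε j)⁻¹) • brk (sm j) (sp j) :=
      brk_key _ _ _ _ _ _ _ _ (fun j => (hbspin j _ (mp j)).1)
        (fun j => ((hbspin j _ (mm j)).2).symm)
        (fun j k h => hsites j k h _ (mm j) _ (mp k))
    calc B lam * C mu - C mu * B lam = brk (B lam) (C mu) := rfl
      _ = _ := by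
          rw [hB lam hl, hC mu hm, key, show brk b bdag = hbar • (1 : Module.End ℂ V) from hosc,
            hA lam hl, hA mu hm, add_sub_add_comm, ← Finset.sum_sub_distrib]
          simp only [hbc, ← sub_smul]
          rw [smul_add, Finset.smul_sum]
          congr 1
          · rw [smul_smul, smul_smul]
            congr 1
            field_simp
            ring
          · refine Finset.sum_congr rfl fun j _ => ?_
            rw [smul_smul, smul_smul]
            congr 1
            rw [inv_mul_split lam mu (ε j) hlm (hle j) (hme j), div_eq_mul_inv]
            ring
  · -- [A(λ), A(μ)]
    have key : brk (((2 * lam - ω) / g ^ 2) • (1 : Module.End ℂ V) + ∑ j, (lam - ε j)⁻¹ • sz j)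
        (((2 * mu - ω) / g ^ 2) • (1 : Module.End ℂ V) + ∑ j, (mu - ε j)⁻¹ • sz j)
        = ((2 * lam - ω) / g ^ 2 * ((2 * mu - ω) / g ^ 2)) • brk 1 1
          + ∑ j, ((lam - ε j)⁻¹ * (mu - ε j)⁻¹) • brk (sz j) (sz j) :=
      brk_key _ _ _ _ _ _ _ _ (fun j => Commute.one_left _)
        (fun j => Commute.one_right _)
        (fun j k h => hsites j k h _ (mz j) _ (mz k))
    calc A lam * A mu - A mu * A lam = brk (A lam) (A mu) := rfl
      _ = 0 := by rw [hA lam hl, hA mu hm, key]; simp [brk_self]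
  · -- [B(λ), B(μ)]
    have key : brk ((2 / g) • b + ∑ j, (lam - ε j)⁻¹ • sm j)
        ((2 / g) • b + ∑ j, (mu - ε j)⁻¹ • sm j)
        = (2 / g * (2 / g)) • brk b b
          + ∑ j, ((lam - ε j)⁻¹ * (mu - ε j)⁻¹) • brk (sm j) (sm j) :=
      brk_key _ _ _ _ _ _ _ _ (fun j => (hbspin j _ (mm j)).1)
        (fun j => ((hbspin j _ (mm j)).1).symm)
        (fun j k h => hsites j k h _ (mm j) _ (mm k))
    calc B lam * B mu - B mu * B lam = brk (B lam) (B mu) := rfl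
      _ = 0 := by rw [hB lam hl, hB mu hm, key]; simp [brk_self]
  · -- [C(λ), C(μ)]
    have key : brk ((2 / g) • bdag + ∑ j, (lam - ε j)⁻¹ • sp j)
        ((2 / g) • bdag + ∑ j, (mu - ε j)⁻¹ • sp j)
        = (2 / g * (2 / g)) • brk bdag bdag
          + ∑ j, ((lam - ε j)⁻¹ * (mu - ε j)⁻¹) • brk (sp j) (sp j) :=
      brk_key _ _ _ _ _ _ _ _ (fun j => (hbspin j _ (mp j)).2)
        (fun j => ((hbspin j _ (mp j)).2).symm)
        (fun j k h => hsites j k h _ (mp j) _ (mp k))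
    calc C lam * C mu - C mu * C lam = brk (C lam) (C mu) := rfl
      _ = 0 := by rw [hC lam hl, hC mu hm, key]; simp [brk_self]
end

section
/- Define T(λ) = A(λ)² + (1/2)(B(λ)C(λ) + C(λ)B(λ)) for λ ∉ {ε_1, …, ε_n}. Then the operators T(λ) form a commuting family: for all distinct λ, μ ∉ {ε_1, …, ε_n}, T(λ)T(μ) = T(μ)T(λ). -/
open BigOperators Finset


/-- Commutator of two "scalar + weighted sum of site operators" expressions. -/
lemma gaudin_sum_comm {R : Type*} [Ring R] [Algebra ℂ R] {n : ℕ}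
    (p q : ℂ) (u v : R) (f g : Fin n → ℂ) (x y : Fin n → R)
    (huy : ∀ j, u * y j = y j * u)
    (hxv : ∀ j, x j * v = v * x j)
    (hxy : ∀ j l, j ≠ l → x j * y l = y l * x j) :
    (p • u + ∑ j, f j • x j) * (q • v + ∑ j, g j • y j)
      - (q • v + ∑ j, g j • y j) * (p • u + ∑ j, f j • x j)
    = (p * q) • (u * v - v * u)
      + ∑ j, (f j * g j) • (x j * y j - y j * x j) := by
  have c1 : (p • u) * (∑ j, g j • y j) = (∑ j, g j • y j) * (p • u) := by
    rw [Finset.mul_sum, Finset.sum_mul]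
    refine Finset.sum_congr rfl fun j _ => ?_
    rw [smul_mul_assoc, mul_smul_comm, smul_mul_assoc, mul_smul_comm, huy j,
      smul_comm p (g j)]
  have c2 : (∑ j, f j • x j) * (q • v) = (q • v) * (∑ j, f j • x j) := by
    rw [Finset.mul_sum, Finset.sum_mul]
    refine Finset.sum_congr rfl fun j _ => ?_
    rw [smul_mul_assoc, mul_smul_comm, smul_mul_assoc, mul_smul_comm, hxv j,
      smul_comm (f j) q]
  have c3 : (p • u) * (q • v) - (q • v) * (p • u) = (p * q) • (u * v - v * u) := by
    rw [smul_mul_assoc, mul_smul_comm, smul_mul_assoc, mul_smul_comm,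
      smul_smul, smul_smul, mul_comm q p, ← smul_sub]
  have c4 : (∑ j, f j • x j) * (∑ j, g j • y j) - (∑ j, g j • y j) * (∑ j, f j • x j)
      = ∑ j, (f j * g j) • (x j * y j - y j * x j) := by
    rw [Finset.sum_mul_sum, Finset.sum_mul_sum]
    have swap : ∑ j, ∑ l, (g j • y j) * (f l • x l)
        = ∑ j, ∑ l, (g l • y l) * (f j • x j) := Finset.sum_comm
    rw [swap, ← Finset.sum_sub_distrib]
    refine Finset.sum_congr rfl fun j _ => ?_
    rw [← Finset.sum_sub_distrib]
    rw [Finset.sum_eq_single j]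
    · rw [smul_mul_assoc, mul_smul_comm, smul_mul_assoc, mul_smul_comm,
        smul_smul, smul_smul, mul_comm (g j) (f j), ← smul_sub]
    · intro l _ hl
      rw [smul_mul_assoc, mul_smul_comm, smul_mul_assoc, mul_smul_comm,
        smul_smul, smul_smul, mul_comm (g l) (f j), hxy j l (fun h => hl h.symm) ]
      · exact sub_self _
    · intro h; exact absurd (Finset.mem_univ j) h
  calc (p • u + ∑ j, f j • x j) * (q • v + ∑ j, g j • y j)
      - (q • v + ∑ j, g j • y j) * (p • u + ∑ j, f j • x j)
      = ((p • u) * (q • v) - (q • v) * (p • u))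
        + ((p • u) * (∑ j, g j • y j) - (∑ j, g j • y j) * (p • u))
        + ((∑ j, f j • x j) * (q • v) - (q • v) * (∑ j, f j • x j))
        + ((∑ j, f j • x j) * (∑ j, g j • y j)
            - (∑ j, g j • y j) * (∑ j, f j • x j)) := by
        simp only [add_mul, mul_add]; abel
    _ = (p * q) • (u * v - v * u) + ∑ j, (f j * g j) • (x j * y j - y j * x j) := by
        rw [c1, c2, c3, c4]; abel


/-- Abstract commutation of transfer matrices from the Gaudin-algebra relations. -/
lemma gaudin_key {R : Type*} [Ring R] [Algebra ℂ R] (k : ℂ) (A1 A2 B1 B2 C1 C2 : R)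
    (h1 : A1 * A2 = A2 * A1)
    (h2 : B1 * B2 - B2 * B1 = 0)
    (h3 : C1 * C2 - C2 * C1 = 0)
    (h4 : A1 * B2 - B2 * A1 = k • (B1 - B2))
    (h5 : A2 * B1 - B1 * A2 = k • (B1 - B2))
    (h6 : A1 * C2 - C2 * A1 = -(k • (C1 - C2)))
    (h7 : A2 * C1 - C1 * A2 = -(k • (C1 - C2)))
    (h8 : B1 * C2 - C2 * B1 = k • (A1 - A2) + k • (A1 - A2))
    (h9 : B2 * C1 - C1 * B2 = k • (A1 - A2) + k • (A1 - A2))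
    (h10 : (A1 * B1 - B1 * A1) * C2 - C2 * (A1 * B1 - B1 * A1)
         = (A1 * C1 - C1 * A1) * B2 - B2 * (A1 * C1 - C1 * A1)) :
    (A1 ^ 2 + ((1 : ℂ) / 2) • (B1 * C1 + C1 * B1))
      * (A2 ^ 2 + ((1 : ℂ) / 2) • (B2 * C2 + C2 * B2))
    = (A2 ^ 2 + ((1 : ℂ) / 2) • (B2 * C2 + C2 * B2))
      * (A1 ^ 2 + ((1 : ℂ) / 2) • (B1 * C1 + C1 * B1)) := by
  -- commutator with one factor of U₂ := B2*C2 + C2*B2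
  have e1 : A1 * (B2 * C2 + C2 * B2) - (B2 * C2 + C2 * B2) * A1
      = k • ((B1 - B2) * C2 + C2 * (B1 - B2) - B2 * (C1 - C2) - (C1 - C2) * B2) := by
    have h : A1 * (B2 * C2 + C2 * B2) - (B2 * C2 + C2 * B2) * A1
        = (A1 * B2 - B2 * A1) * C2 + B2 * (A1 * C2 - C2 * A1)
          + (A1 * C2 - C2 * A1) * B2 + C2 * (A1 * B2 - B2 * A1) := by noncomm_ring
    rw [h, h4, h6]
    simp only [smul_sub, smul_add, smul_neg, sub_mul, mul_sub, add_mul, mul_add,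
      neg_mul, mul_neg, smul_mul_assoc, mul_smul_comm]
    abel
  have e2 : A2 * (B1 * C1 + C1 * B1) - (B1 * C1 + C1 * B1) * A2
      = k • ((B1 - B2) * C1 + C1 * (B1 - B2) - B1 * (C1 - C2) - (C1 - C2) * B1) := by
    have h : A2 * (B1 * C1 + C1 * B1) - (B1 * C1 + C1 * B1) * A2
        = (A2 * B1 - B1 * A2) * C1 + B1 * (A2 * C1 - C1 * A2)
          + (A2 * C1 - C1 * A2) * B1 + C1 * (A2 * B1 - B1 * A2) := by noncomm_ring
    rw [h, h5, h7]
    simp only [smul_sub, smul_add, smul_neg, sub_mul, mul_sub, add_mul, mul_add,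
      neg_mul, mul_neg, smul_mul_assoc, mul_smul_comm]
    abel
  -- quadratic lifts
  have E1 : A1 ^ 2 * (B2 * C2 + C2 * B2) - (B2 * C2 + C2 * B2) * A1 ^ 2
      = k • (A1 * ((B1 - B2) * C2 + C2 * (B1 - B2) - B2 * (C1 - C2) - (C1 - C2) * B2)
          + ((B1 - B2) * C2 + C2 * (B1 - B2) - B2 * (C1 - C2) - (C1 - C2) * B2) * A1) := by
    have h : A1 ^ 2 * (B2 * C2 + C2 * B2) - (B2 * C2 + C2 * B2) * A1 ^ 2
        = A1 * (A1 * (B2 * C2 + C2 * B2) - (B2 * C2 + C2 * B2) * A1)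
          + (A1 * (B2 * C2 + C2 * B2) - (B2 * C2 + C2 * B2) * A1) * A1 := by noncomm_ring
    rw [h, e1, mul_smul_comm, smul_mul_assoc, ← smul_add]
  have E2 : A2 ^ 2 * (B1 * C1 + C1 * B1) - (B1 * C1 + C1 * B1) * A2 ^ 2
      = k • (A2 * ((B1 - B2) * C1 + C1 * (B1 - B2) - B1 * (C1 - C2) - (C1 - C2) * B1)
          + ((B1 - B2) * C1 + C1 * (B1 - B2) - B1 * (C1 - C2) - (C1 - C2) * B1) * A2) := by
    have h : A2 ^ 2 * (B1 * C1 + C1 * B1) - (B1 * C1 + C1 * B1) * A2 ^ 2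
        = A2 * (A2 * (B1 * C1 + C1 * B1) - (B1 * C1 + C1 * B1) * A2)
          + (A2 * (B1 * C1 + C1 * B1) - (B1 * C1 + C1 * B1) * A2) * A2 := by noncomm_ring
    rw [h, e2, mul_smul_comm, smul_mul_assoc, ← smul_add]
  have E2' : (B1 * C1 + C1 * B1) * A2 ^ 2 - A2 ^ 2 * (B1 * C1 + C1 * B1)
      = -(k • (A2 * ((B1 - B2) * C1 + C1 * (B1 - B2) - B1 * (C1 - C2) - (C1 - C2) * B1)
          + ((B1 - B2) * C1 + C1 * (B1 - B2) - B1 * (C1 - C2) - (C1 - C2) * B1) * A2)) := by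
    rw [← neg_sub (A2 ^ 2 * (B1 * C1 + C1 * B1)) ((B1 * C1 + C1 * B1) * A2 ^ 2), E2]
  -- helper for [PQ, RS]
  have brk : ∀ P Q W Z : R, (P * Q) * (W * Z) - (W * Z) * (P * Q)
      = P * W * (Q * Z - Z * Q) + P * (Q * W - W * Q) * Z
        + W * (P * Z - Z * P) * Q + (P * W - W * P) * Z * Q := by
    intros; noncomm_ring
  have h9' : C1 * B2 - B2 * C1 = -(k • (A1 - A2) + k • (A1 - A2)) := by
    rw [← neg_sub (B2 * C1) (C1 * B2), h9]
  -- [U1, U2]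
  have E3 : (B1 * C1 + C1 * B1) * (B2 * C2 + C2 * B2)
        - (B2 * C2 + C2 * B2) * (B1 * C1 + C1 * B1)
      = k • (B2 * (A1 - A2) * C1 - B1 * (A1 - A2) * C2 + (A1 - A2) * B2 * C1
            - B1 * C2 * (A1 - A2) + C1 * B2 * (A1 - A2) - (A1 - A2) * C2 * B1
            + C1 * (A1 - A2) * B2 - C2 * (A1 - A2) * B1)
        + k • (B2 * (A1 - A2) * C1 - B1 * (A1 - A2) * C2 + (A1 - A2) * B2 * C1
            - B1 * C2 * (A1 - A2) + C1 * B2 * (A1 - A2) - (A1 - A2) * C2 * B1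
            + C1 * (A1 - A2) * B2 - C2 * (A1 - A2) * B1) := by
    have hsplit : (B1 * C1 + C1 * B1) * (B2 * C2 + C2 * B2)
          - (B2 * C2 + C2 * B2) * (B1 * C1 + C1 * B1)
        = ((B1 * C1) * (B2 * C2) - (B2 * C2) * (B1 * C1))
          + ((B1 * C1) * (C2 * B2) - (C2 * B2) * (B1 * C1))
          + ((C1 * B1) * (B2 * C2) - (B2 * C2) * (C1 * B1))
          + ((C1 * B1) * (C2 * B2) - (C2 * B2) * (C1 * B1)) := by noncomm_ring
    rw [hsplit, brk B1 C1 B2 C2, brk B1 C1 C2 B2, brk C1 B1 B2 C2, brk C1 B1 C2 B2,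
      h2, h3, h8, h9']
    simp only [smul_sub, smul_add, smul_neg, sub_mul, mul_sub, add_mul, mul_add,
      neg_mul, mul_neg, smul_mul_assoc, mul_smul_comm, mul_zero, zero_mul,
      sub_zero, add_zero, zero_add, neg_neg]
    abel
  -- commuting squares of A
  have hAA : A1 ^ 2 * A2 ^ 2 - A2 ^ 2 * A1 ^ 2 = 0 := by
    have : A1 ^ 2 * A2 ^ 2 = A2 ^ 2 * A1 ^ 2 := ((Commute.pow_pow h1 2 2))
    rw [this, sub_self]
  -- the residual free identity
  have Efree : (A1 * ((B1 - B2) * C2 + C2 * (B1 - B2) - B2 * (C1 - C2) - (C1 - C2) * B2)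
          + ((B1 - B2) * C2 + C2 * (B1 - B2) - B2 * (C1 - C2) - (C1 - C2) * B2) * A1)
        - (A2 * ((B1 - B2) * C1 + C1 * (B1 - B2) - B1 * (C1 - C2) - (C1 - C2) * B1)
          + ((B1 - B2) * C1 + C1 * (B1 - B2) - B1 * (C1 - C2) - (C1 - C2) * B1) * A2)
        + (B2 * (A1 - A2) * C1 - B1 * (A1 - A2) * C2 + (A1 - A2) * B2 * C1
            - B1 * C2 * (A1 - A2) + C1 * B2 * (A1 - A2) - (A1 - A2) * C2 * B1
            + C1 * (A1 - A2) * B2 - C2 * (A1 - A2) * B1)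
      = (((A1 - A2) * B1 - B1 * (A1 - A2)) * C2 - C2 * ((A1 - A2) * B1 - B1 * (A1 - A2)))
        - (((A1 - A2) * C1 - C1 * (A1 - A2)) * B2
            - B2 * ((A1 - A2) * C1 - C1 * (A1 - A2))) := by
    noncomm_ring
  have hx : (A1 - A2) * B1 - B1 * (A1 - A2) = (A1 * B1 - B1 * A1) - k • (B1 - B2) := by
    rw [← h5]; noncomm_ring
  have hy : (A1 - A2) * C1 - C1 * (A1 - A2) = (A1 * C1 - C1 * A1) + k • (C1 - C2) := by
    rw [show k • (C1 - C2) = -(A2 * C1 - C1 * A2) from by rw [h7, neg_neg]]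
    noncomm_ring
  have hzero : (((A1 - A2) * B1 - B1 * (A1 - A2)) * C2
        - C2 * ((A1 - A2) * B1 - B1 * (A1 - A2)))
      - (((A1 - A2) * C1 - C1 * (A1 - A2)) * B2
        - B2 * ((A1 - A2) * C1 - C1 * (A1 - A2))) = 0 := by
    rw [hx, hy]
    have expand : (((A1 * B1 - B1 * A1) - k • (B1 - B2)) * C2
          - C2 * ((A1 * B1 - B1 * A1) - k • (B1 - B2)))
        - (((A1 * C1 - C1 * A1) + k • (C1 - C2)) * B2
          - B2 * ((A1 * C1 - C1 * A1) + k • (C1 - C2)))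
        = (((A1 * B1 - B1 * A1) * C2 - C2 * (A1 * B1 - B1 * A1))
            - ((A1 * C1 - C1 * A1) * B2 - B2 * (A1 * C1 - C1 * A1)))
          - k • ((B1 * C2 - C2 * B1) - (B2 * C2 - C2 * B2))
          - k • ((C1 * B2 - B2 * C1) + (B2 * C2 - C2 * B2)) := by
      simp only [smul_sub, smul_add, smul_neg, sub_mul, mul_sub, add_mul, mul_add,
        neg_mul, mul_neg, smul_mul_assoc, mul_smul_comm]
      abel
    rw [expand, h10, sub_self, h8, h9']
    simp only [smul_sub, smul_add, smul_neg, neg_add_rev, neg_neg]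
    abel
  have Ezero : (A1 * ((B1 - B2) * C2 + C2 * (B1 - B2) - B2 * (C1 - C2) - (C1 - C2) * B2)
          + ((B1 - B2) * C2 + C2 * (B1 - B2) - B2 * (C1 - C2) - (C1 - C2) * B2) * A1)
        - (A2 * ((B1 - B2) * C1 + C1 * (B1 - B2) - B1 * (C1 - C2) - (C1 - C2) * B1)
          + ((B1 - B2) * C1 + C1 * (B1 - B2) - B1 * (C1 - C2) - (C1 - C2) * B1) * A2)
        + (B2 * (A1 - A2) * C1 - B1 * (A1 - A2) * C2 + (A1 - A2) * B2 * C1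
            - B1 * C2 * (A1 - A2) + C1 * B2 * (A1 - A2) - (A1 - A2) * C2 * B1
            + C1 * (A1 - A2) * B2 - C2 * (A1 - A2) * B1) = 0 := Efree.trans hzero
  -- final assembly
  rw [← sub_eq_zero]
  have expand : (A1 ^ 2 + ((1 : ℂ) / 2) • (B1 * C1 + C1 * B1))
        * (A2 ^ 2 + ((1 : ℂ) / 2) • (B2 * C2 + C2 * B2))
      - (A2 ^ 2 + ((1 : ℂ) / 2) • (B2 * C2 + C2 * B2))
        * (A1 ^ 2 + ((1 : ℂ) / 2) • (B1 * C1 + C1 * B1))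
      = (A1 ^ 2 * A2 ^ 2 - A2 ^ 2 * A1 ^ 2)
        + ((1 : ℂ) / 2) • (A1 ^ 2 * (B2 * C2 + C2 * B2) - (B2 * C2 + C2 * B2) * A1 ^ 2)
        + ((1 : ℂ) / 2) • ((B1 * C1 + C1 * B1) * A2 ^ 2 - A2 ^ 2 * (B1 * C1 + C1 * B1))
        + (((1 : ℂ) / 2) * ((1 : ℂ) / 2))
            • ((B1 * C1 + C1 * B1) * (B2 * C2 + C2 * B2)
                - (B2 * C2 + C2 * B2) * (B1 * C1 + C1 * B1)) := by
    simp only [add_mul, mul_add, smul_mul_assoc, mul_smul_comm, smul_sub, smul_add,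
      smul_smul]
    abel
  rw [expand, hAA, E1, E2', E3]
  have final : ∀ X Y Q : R, X - Y + Q = 0 →
      (0 : R) + ((1 : ℂ) / 2) • (k • X) + ((1 : ℂ) / 2) • (-(k • Y))
        + (((1 : ℂ) / 2) * ((1 : ℂ) / 2)) • (k • Q + k • Q) = 0 := by
    intro X Y Q hXYQ
    have : (0 : R) + ((1 : ℂ) / 2) • (k • X) + ((1 : ℂ) / 2) • (-(k • Y))
        + (((1 : ℂ) / 2) * ((1 : ℂ) / 2)) • (k • Q + k • Q)
        = (((1 : ℂ) / 2) * k) • (X - Y + Q) := by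
      module
    rw [this, hXYQ, smul_zero]
  exact final _ _ _ Ezero

/-- the operators `T(λ) = A(λ)² + (1/2)(B(λ)C(λ) + C(λ)B(λ))`
form a commuting family. -/
theorem transfer_matrices_commute
    (V : Type*) [AddCommGroup V] [Module ℂ V]
    (n : ℕ) (hbar g ω : ℂ) (hhbar : hbar ≠ 0) (hg : g ≠ 0)
    (ε : Fin n → ℂ) (hε : Function.Injective ε)
    (b bdag : Module.End ℂ V) (sz sp sm : Fin n → Module.End ℂ V)
    (hosc : b * bdag - bdag * b = hbar • (1 : Module.End ℂ V))
    (hpm : ∀ j, sp j * sm j - sm j * sp j = (2 * hbar) • sz j)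
    (hzp : ∀ j, sz j * sp j - sp j * sz j = hbar • sp j)
    (hzm : ∀ j, sz j * sm j - sm j * sz j = (-hbar) • sm j)
    (hsites : ∀ j k, j ≠ k →
      ∀ X ∈ ({sz j, sp j, sm j} : Set (Module.End ℂ V)),
      ∀ Y ∈ ({sz k, sp k, sm k} : Set (Module.End ℂ V)), Commute X Y)
    (hbspin : ∀ j, ∀ X ∈ ({sz j, sp j, sm j} : Set (Module.End ℂ V)),
      Commute b X ∧ Commute bdag X)
    (A B C T : ℂ → Module.End ℂ V)
    (hA : ∀ lam, (∀ j, lam ≠ ε j) →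
      A lam = ((2 * lam - ω) / g ^ 2) • (1 : Module.End ℂ V)
        + ∑ j, (lam - ε j)⁻¹ • sz j)
    (hB : ∀ lam, (∀ j, lam ≠ ε j) →
      B lam = (2 / g) • b + ∑ j, (lam - ε j)⁻¹ • sm j)
    (hC : ∀ lam, (∀ j, lam ≠ ε j) →
      C lam = (2 / g) • bdag + ∑ j, (lam - ε j)⁻¹ • sp j)
    (hT : ∀ lam, T lam = A lam ^ 2 + ((1 : ℂ) / 2) • (B lam * C lam + C lam * B lam)) :
    ∀ lam mu : ℂ, lam ≠ mu → (∀ j, lam ≠ ε j) → (∀ j, mu ≠ ε j) →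
      T lam * T mu = T mu * T lam := by
  intro lam mu hlm hl hm
  have memz : ∀ j, sz j ∈ ({sz j, sp j, sm j} : Set (Module.End ℂ V)) :=
    fun j => Set.mem_insert _ _
  have memp : ∀ j, sp j ∈ ({sz j, sp j, sm j} : Set (Module.End ℂ V)) :=
    fun j => Set.mem_insert_of_mem _ (Set.mem_insert _ _)
  have memm : ∀ j, sm j ∈ ({sz j, sp j, sm j} : Set (Module.End ℂ V)) :=
    fun j => Set.mem_insert_of_mem _ (Set.mem_insert_of_mem _ rfl)
  have hls : ∀ j, lam - ε j ≠ 0 := fun j => sub_ne_zero.mpr (hl j)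
  have hms : ∀ j, mu - ε j ≠ 0 := fun j => sub_ne_zero.mpr (hm j)
  have hd : lam - mu ≠ 0 := sub_ne_zero.mpr hlm
  -- basic commutation facts
  have czb : ∀ j, sz j * b = b * sz j := fun j => ((hbspin j (sz j) (memz j)).1.eq).symm
  have cpb : ∀ j, sp j * b = b * sp j := fun j => ((hbspin j (sp j) (memp j)).1.eq).symm
  have cmb : ∀ j, sm j * b = b * sm j := fun j => ((hbspin j (sm j) (memm j)).1.eq).symm
  have czB : ∀ j, sz j * bdag = bdag * sz j := fun j => ((hbspin j (sz j) (memz j)).2.eq).symm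
  have cpB : ∀ j, sp j * bdag = bdag * sp j := fun j => ((hbspin j (sp j) (memp j)).2.eq).symm
  have cmB : ∀ j, sm j * bdag = bdag * sm j := fun j => ((hbspin j (sm j) (memm j)).2.eq).symm
  have czz : ∀ j l : Fin n, j ≠ l → sz j * sz l = sz l * sz j :=
    fun j l hjl => (hsites j l hjl (sz j) (memz j) (sz l) (memz l)).eq
  have czm : ∀ j l : Fin n, j ≠ l → sz j * sm l = sm l * sz j :=
    fun j l hjl => (hsites j l hjl (sz j) (memz j) (sm l) (memm l)).eq
  have czp : ∀ j l : Fin n, j ≠ l → sz j * sp l = sp l * sz j :=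
    fun j l hjl => (hsites j l hjl (sz j) (memz j) (sp l) (memp l)).eq
  have cmm : ∀ j l : Fin n, j ≠ l → sm j * sm l = sm l * sm j :=
    fun j l hjl => (hsites j l hjl (sm j) (memm j) (sm l) (memm l)).eq
  have cpp : ∀ j l : Fin n, j ≠ l → sp j * sp l = sp l * sp j :=
    fun j l hjl => (hsites j l hjl (sp j) (memp j) (sp l) (memp l)).eq
  have cmp : ∀ j l : Fin n, j ≠ l → sm j * sp l = sp l * sm j :=
    fun j l hjl => (hsites j l hjl (sm j) (memm j) (sp l) (memp l)).eq
  have cpm : ∀ j l : Fin n, j ≠ l → sp j * sm l = sm l * sp j :=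
    fun j l hjl => (hsites j l hjl (sp j) (memp j) (sm l) (memm l)).eq
  have hmp : ∀ j, sm j * sp j - sp j * sm j = (-(2 * hbar)) • sz j := fun j => by
    rw [← neg_sub (sp j * sm j) (sm j * sp j), hpm j, neg_smul]
  -- raw commutators
  have rawAB : ∀ x y : ℂ, (∀ j, x ≠ ε j) → (∀ j, y ≠ ε j) →
      A x * B y - B y * A x
        = ∑ j, ((x - ε j)⁻¹ * (y - ε j)⁻¹ * (-hbar)) • sm j := by
    intro x y hx hy
    rw [hA x hx, hB y hy,
      gaudin_sum_comm ((2 * x - ω) / g ^ 2) (2 / g) 1 b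
        (fun j => (x - ε j)⁻¹) (fun j => (y - ε j)⁻¹) sz sm
        (fun j => by rw [one_mul, mul_one]) czb czm]
    rw [one_mul, mul_one, sub_self, smul_zero, zero_add]
    exact Finset.sum_congr rfl fun j _ => by rw [hzm j, smul_smul]
  have rawAC : ∀ x y : ℂ, (∀ j, x ≠ ε j) → (∀ j, y ≠ ε j) →
      A x * C y - C y * A x
        = ∑ j, ((x - ε j)⁻¹ * (y - ε j)⁻¹ * hbar) • sp j := by
    intro x y hx hy
    rw [hA x hx, hC y hy,
      gaudin_sum_comm ((2 * x - ω) / g ^ 2) (2 / g) 1 bdag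
        (fun j => (x - ε j)⁻¹) (fun j => (y - ε j)⁻¹) sz sp
        (fun j => by rw [one_mul, mul_one]) czB czp]
    rw [one_mul, mul_one, sub_self, smul_zero, zero_add]
    exact Finset.sum_congr rfl fun j _ => by rw [hzp j, smul_smul]
  have rawBC : ∀ x y : ℂ, (∀ j, x ≠ ε j) → (∀ j, y ≠ ε j) →
      B x * C y - C y * B x
        = (2 / g * (2 / g) * hbar) • (1 : Module.End ℂ V)
          + ∑ j, ((x - ε j)⁻¹ * (y - ε j)⁻¹ * (-(2 * hbar))) • sz j := by
    intro x y hx hy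
    rw [hB x hx, hC y hy,
      gaudin_sum_comm (2 / g) (2 / g) b bdag
        (fun j => (x - ε j)⁻¹) (fun j => (y - ε j)⁻¹) sm sp
        (fun j => (cpb j).symm) cmB cmp]
    rw [hosc, smul_smul]
    congr 1
    exact Finset.sum_congr rfl fun j _ => by rw [hmp j, smul_smul]
  -- differences
  have hBsub : B lam - B mu = ∑ j, ((lam - ε j)⁻¹ - (mu - ε j)⁻¹) • sm j := by
    rw [hB lam hl, hB mu hm, add_sub_add_left_eq_sub, ← Finset.sum_sub_distrib]
    exact Finset.sum_congr rfl fun j _ => (sub_smul _ _ _).symm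
  have hCsub : C lam - C mu = ∑ j, ((lam - ε j)⁻¹ - (mu - ε j)⁻¹) • sp j := by
    rw [hC lam hl, hC mu hm, add_sub_add_left_eq_sub, ← Finset.sum_sub_distrib]
    exact Finset.sum_congr rfl fun j _ => (sub_smul _ _ _).symm
  have hAsub : A lam - A mu
      = ((2 * lam - ω) / g ^ 2 - (2 * mu - ω) / g ^ 2) • (1 : Module.End ℂ V)
        + ∑ j, ((lam - ε j)⁻¹ - (mu - ε j)⁻¹) • sz j := by
    rw [hA lam hl, hA mu hm, add_sub_add_comm, ← Finset.sum_sub_distrib, sub_smul]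
    congr 1
    exact Finset.sum_congr rfl fun j _ => (sub_smul _ _ _).symm
  -- the nine relations
  have h1d : A lam * A mu - A mu * A lam = 0 := by
    rw [hA lam hl, hA mu hm,
      gaudin_sum_comm ((2 * lam - ω) / g ^ 2) ((2 * mu - ω) / g ^ 2) 1 1
        (fun j => (lam - ε j)⁻¹) (fun j => (mu - ε j)⁻¹) sz sz
        (fun j => by rw [one_mul, mul_one]) (fun j => by rw [one_mul, mul_one]) czz]
    simp
  have h2d : B lam * B mu - B mu * B lam = 0 := by
    rw [hB lam hl, hB mu hm,
      gaudin_sum_comm (2 / g) (2 / g) b b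
        (fun j => (lam - ε j)⁻¹) (fun j => (mu - ε j)⁻¹) sm sm
        (fun j => (cmb j).symm) cmb cmm]
    simp
  have h3d : C lam * C mu - C mu * C lam = 0 := by
    rw [hC lam hl, hC mu hm,
      gaudin_sum_comm (2 / g) (2 / g) bdag bdag
        (fun j => (lam - ε j)⁻¹) (fun j => (mu - ε j)⁻¹) sp sp
        (fun j => (cpB j).symm) cpB cpp]
    simp
  have h4' : A lam * B mu - B mu * A lam = (hbar / (lam - mu)) • (B lam - B mu) := by
    rw [rawAB lam mu hl hm, hBsub, Finset.smul_sum]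
    refine Finset.sum_congr rfl fun j _ => ?_
    rw [smul_smul]
    congr 1
    field_simp [hls j, hms j, hd]
    ring
  have h5' : A mu * B lam - B lam * A mu = (hbar / (lam - mu)) • (B lam - B mu) := by
    rw [rawAB mu lam hm hl, hBsub, Finset.smul_sum]
    refine Finset.sum_congr rfl fun j _ => ?_
    rw [smul_smul]
    congr 1
    field_simp [hls j, hms j, hd]
    ring
  have h6' : A lam * C mu - C mu * A lam = -((hbar / (lam - mu)) • (C lam - C mu)) := by
    rw [rawAC lam mu hl hm, hCsub, ← neg_smul, Finset.smul_sum]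
    refine Finset.sum_congr rfl fun j _ => ?_
    rw [smul_smul]
    congr 1
    field_simp [hls j, hms j, hd]
    ring
  have h7' : A mu * C lam - C lam * A mu = -((hbar / (lam - mu)) • (C lam - C mu)) := by
    rw [rawAC mu lam hm hl, hCsub, ← neg_smul, Finset.smul_sum]
    refine Finset.sum_congr rfl fun j _ => ?_
    rw [smul_smul]
    congr 1
    field_simp [hls j, hms j, hd]
    ring
  have h8' : B lam * C mu - C mu * B lam
      = (hbar / (lam - mu)) • (A lam - A mu) + (hbar / (lam - mu)) • (A lam - A mu) := by
    rw [rawBC lam mu hl hm, hAsub, smul_add, smul_smul, Finset.smul_sum,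
      add_add_add_comm, ← add_smul, ← Finset.sum_add_distrib]
    congr 1
    · congr 1
      field_simp [hd, hg]
      ring
    · refine Finset.sum_congr rfl fun j _ => ?_
      rw [smul_smul, ← add_smul]
      congr 1
      field_simp [hls j, hms j, hd]
      ring
  have h9' : B mu * C lam - C lam * B mu
      = (hbar / (lam - mu)) • (A lam - A mu) + (hbar / (lam - mu)) • (A lam - A mu) := by
    rw [rawBC mu lam hm hl, hAsub, smul_add, smul_smul, Finset.smul_sum,
      add_add_add_comm, ← add_smul, ← Finset.sum_add_distrib]
    congr 1
    · congr 1
      field_simp [hd, hg]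
      ring
    · refine Finset.sum_congr rfl fun j _ => ?_
      rw [smul_smul, ← add_smul]
      congr 1
      field_simp [hls j, hms j, hd]
      ring
  have h10' : (A lam * B lam - B lam * A lam) * C mu
        - C mu * (A lam * B lam - B lam * A lam)
      = (A lam * C lam - C lam * A lam) * B mu
        - B mu * (A lam * C lam - C lam * A lam) := by
    rw [rawAB lam lam hl hl, rawAC lam lam hl hl]
    have e0 : ∀ (w : Fin n → Module.End ℂ V) (F : Fin n → ℂ),
        (∑ j, F j • w j) = (0 : ℂ) • (1 : Module.End ℂ V) + ∑ j, F j • w j := by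
      intro w F; rw [zero_smul, zero_add]
    rw [hC mu hm, hB mu hm,
      e0 sm (fun j => (lam - ε j)⁻¹ * (lam - ε j)⁻¹ * (-hbar)),
      e0 sp (fun j => (lam - ε j)⁻¹ * (lam - ε j)⁻¹ * hbar),
      gaudin_sum_comm 0 (2 / g) 1 bdag
        (fun j => (lam - ε j)⁻¹ * (lam - ε j)⁻¹ * (-hbar)) (fun j => (mu - ε j)⁻¹) sm sp
        (fun j => by rw [one_mul, mul_one]) cmB cmp,
      gaudin_sum_comm 0 (2 / g) 1 b
        (fun j => (lam - ε j)⁻¹ * (lam - ε j)⁻¹ * hbar) (fun j => (mu - ε j)⁻¹) sp sm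
        (fun j => by rw [one_mul, mul_one]) cpb cpm]
    simp only [zero_mul, zero_smul, zero_add]
    refine Finset.sum_congr rfl fun j _ => ?_
    rw [hmp j, hpm j, smul_smul, smul_smul]
    congr 1
    ring
  rw [hT lam, hT mu]
  exact gaudin_key (hbar / (lam - mu)) (A lam) (A mu) (B lam) (B mu) (C lam) (C mu)
    (sub_eq_zero.mp h1d) h2d h3d h4' h5' h6' h7' h8' h9' h10'
end

section
/- Define T(λ) = A(λ)² + (1/2)(B(λ)C(λ) + C(λ)B(λ)). Suppose v ∈ V satisfies b v = 0, s_j^- v = 0 and s_j^z v = −ħ σ_j v for each j, with σ_j ∈ ℂ. Set a(λ) = (2λ − ω)/g² − Σ_j ħ σ_j/(λ − ε_j) and a′(λ) = 2/g² + Σ_j ħ σ_j/(λ − ε_j)². Then for every λ ∉ {ε_1, …, ε_n}: B(λ) v = 0, A(λ) v = a(λ) v, B(λ)C(λ) v = 2ħ a′(λ) v, and T(λ) v = (a(λ)² + ħ a′(λ)) v. -/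
open BigOperators Finset

/-- action of `B(λ)`, `A(λ)`, `B(λ)C(λ)` and
`T(λ) = A(λ)² + (1/2)(B(λ)C(λ)+C(λ)B(λ))` on the lowest weight vector. -/
theorem action_on_vacuum
    (V : Type*) [AddCommGroup V] [Module ℂ V]
    (n : ℕ) (hbar g ω : ℂ) (hhbar : hbar ≠ 0) (hg : g ≠ 0)
    (ε : Fin n → ℂ) (hε : Function.Injective ε)
    (b bdag : Module.End ℂ V) (sz sp sm : Fin n → Module.End ℂ V)
    (hosc : b * bdag - bdag * b = hbar • (1 : Module.End ℂ V))
    (hpm : ∀ j, sp j * sm j - sm j * sp j = (2 * hbar) • sz j)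
    (hzp : ∀ j, sz j * sp j - sp j * sz j = hbar • sp j)
    (hzm : ∀ j, sz j * sm j - sm j * sz j = (-hbar) • sm j)
    (hsites : ∀ j k, j ≠ k →
      ∀ X ∈ ({sz j, sp j, sm j} : Set (Module.End ℂ V)),
      ∀ Y ∈ ({sz k, sp k, sm k} : Set (Module.End ℂ V)), Commute X Y)
    (hbspin : ∀ j, ∀ X ∈ ({sz j, sp j, sm j} : Set (Module.End ℂ V)),
      Commute b X ∧ Commute bdag X)
    (A B C T : ℂ → Module.End ℂ V)
    (hA : ∀ lam, (∀ j, lam ≠ ε j) →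
      A lam = ((2 * lam - ω) / g ^ 2) • (1 : Module.End ℂ V)
        + ∑ j, (lam - ε j)⁻¹ • sz j)
    (hB : ∀ lam, (∀ j, lam ≠ ε j) →
      B lam = (2 / g) • b + ∑ j, (lam - ε j)⁻¹ • sm j)
    (hC : ∀ lam, (∀ j, lam ≠ ε j) →
      C lam = (2 / g) • bdag + ∑ j, (lam - ε j)⁻¹ • sp j)
    (hT : ∀ lam, T lam = A lam ^ 2 + ((1 : ℂ) / 2) • (B lam * C lam + C lam * B lam))
    (v : V) (σ : Fin n → ℂ)
    (hbv : b v = 0) (hsmv : ∀ j, sm j v = 0)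
    (hszv : ∀ j, sz j v = (-(hbar * σ j)) • v)
    (a a' : ℂ → ℂ)
    (ha : ∀ lam, a lam = (2 * lam - ω) / g ^ 2 - ∑ j, hbar * σ j / (lam - ε j))
    (ha' : ∀ lam, a' lam = 2 / g ^ 2 + ∑ j, hbar * σ j / (lam - ε j) ^ 2) :
    ∀ lam : ℂ, (∀ j, lam ≠ ε j) →
      B lam v = 0
      ∧ A lam v = a lam • v
      ∧ (B lam * C lam) v = (2 * hbar * a' lam) • v
      ∧ T lam v = ((a lam) ^ 2 + hbar * a' lam) • v := by
  intro lam hlam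
  have hBv : B lam v = 0 := by
    rw [hB lam hlam]
    simp [LinearMap.add_apply, LinearMap.smul_apply, LinearMap.sum_apply, hbv, hsmv]
  have hAv : A lam v = a lam • v := by
    rw [hA lam hlam, ha lam]
    simp only [LinearMap.add_apply, LinearMap.smul_apply, Module.End.one_apply,
      LinearMap.sum_apply, hszv, smul_smul]
    rw [← Finset.sum_smul, ← add_smul]
    congr 1
    have hterm : ∀ j : Fin n, (lam - ε j)⁻¹ * -(hbar * σ j) = -(hbar * σ j / (lam - ε j)) := by
      intro j; rw [div_eq_mul_inv]; ring
    simp only [hterm, Finset.sum_neg_distrib]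
    rw [← sub_eq_add_neg]
  have hbbd : b (bdag v) = hbar • v := by
    have h := congrArg (fun f : Module.End ℂ V => f v) hosc
    simp only [LinearMap.sub_apply, Module.End.mul_apply, LinearMap.smul_apply,
      Module.End.one_apply, hbv, map_zero, sub_zero] at h
    exact h
  have hbsp : ∀ k, b (sp k v) = 0 := by
    intro k
    have hc : b * sp k = sp k * b := (hbspin k (sp k) (by simp)).1
    have h := congrArg (fun f : Module.End ℂ V => f v) hc
    simp only [Module.End.mul_apply, hbv, map_zero] at h
    exact h
  have hsmbd : ∀ j, sm j (bdag v) = 0 := by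
    intro j
    have hc : bdag * sm j = sm j * bdag := (hbspin j (sm j) (by simp)).2
    have h := congrArg (fun f : Module.End ℂ V => f v) hc
    simp only [Module.End.mul_apply, hsmv, map_zero] at h
    exact h.symm
  have hsmsp_ne : ∀ j k, j ≠ k → sm j (sp k v) = 0 := by
    intro j k hjk
    have hc : sm j * sp k = sp k * sm j :=
      hsites j k hjk (sm j) (by simp) (sp k) (by simp)
    have h := congrArg (fun f : Module.End ℂ V => f v) hc
    simp only [Module.End.mul_apply, hsmv, map_zero] at h
    exact h
  have hsmsp_eq : ∀ j, sm j (sp j v) = (2 * hbar * (hbar * σ j)) • v := by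
    intro j
    have h := congrArg (fun f : Module.End ℂ V => f v) (hpm j)
    simp only [LinearMap.sub_apply, Module.End.mul_apply, LinearMap.smul_apply,
      hsmv, map_zero, zero_sub, hszv, smul_smul] at h
    have h2 := congrArg Neg.neg h
    rw [neg_neg] at h2
    rw [h2, ← neg_smul]
    congr 1
    ring
  have hCv : C lam v = (2 / g) • bdag v + ∑ j, (lam - ε j)⁻¹ • sp j v := by
    rw [hC lam hlam]
    simp [LinearMap.add_apply, LinearMap.smul_apply, LinearMap.sum_apply]
  have hBbd : B lam (bdag v) = ((2 / g) * hbar) • v := by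
    rw [hB lam hlam]
    simp [LinearMap.add_apply, LinearMap.smul_apply, LinearMap.sum_apply,
      hbbd, hsmbd, smul_smul]
  have hBsp : ∀ k, B lam (sp k v) = ((lam - ε k)⁻¹ * (2 * hbar * (hbar * σ k))) • v := by
    intro k
    rw [hB lam hlam]
    simp only [LinearMap.add_apply, LinearMap.smul_apply, LinearMap.sum_apply,
      hbsp k, smul_zero, zero_add]
    rw [Finset.sum_eq_single k]
    · rw [hsmsp_eq k, smul_smul]
    · intro j _ hjk
      rw [hsmsp_ne j k hjk, smul_zero]
    · intro h; exact absurd (Finset.mem_univ k) h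
  have hBCv : (B lam * C lam) v = (2 * hbar * a' lam) • v := by
    rw [Module.End.mul_apply, hCv, map_add, map_smul, map_sum]
    simp only [map_smul, hBbd, hBsp, smul_smul]
    rw [← Finset.sum_smul, ← add_smul, ha' lam]
    congr 1
    rw [mul_add, Finset.mul_sum]
    congr 1
    · rw [div_eq_mul_inv, div_eq_mul_inv, sq, mul_inv]; ring
    · apply Finset.sum_congr rfl
      intro j _
      rw [div_eq_mul_inv, sq, mul_inv]; ring
  refine ⟨hBv, hAv, hBCv, ?_⟩
  have hCBv : (C lam * B lam) v = 0 := by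
    rw [Module.End.mul_apply, hBv, map_zero]
  have hA2 : (A lam ^ 2) v = (a lam * a lam) • v := by
    rw [pow_two, Module.End.mul_apply, hAv, map_smul, hAv, smul_smul]
  rw [hT lam]
  simp only [LinearMap.add_apply, LinearMap.smul_apply, hA2, hBCv, hCBv, add_zero,
    smul_smul]
  rw [← add_smul]
  congr 1
  ring
end

section
/- Define T(λ) = A(λ)² + (1/2)(B(λ)C(λ) + C(λ)B(λ)). Suppose v ∈ V satisfies b v = 0, s_j^- v = 0 and s_j^z v = −ħ σ_j v for each j, with σ_j ∈ ℂ; set a(λ) = (2λ − ω)/g² − Σ_j ħ σ_j/(λ − ε_j) and a′(λ) = 2/g² + Σ_j ħ σ_j/(λ − ε_j)². Let μ_1, …, μ_M be pairwise distinct complex numbers, none equal to any ε_j, satisfying the Bethe equations a(μ_i) + Σ_{k≠i} ħ/(μ_i − μ_k) = 0 for all i, and set Ω = C(μ_1)C(μ_2)⋯C(μ_M) v. Then for every λ ∉ {ε_1, …, ε_n} ∪ {μ_1, …, μ_M}: T(λ) Ω = Λ(λ) Ω, where Λ(λ) = a(λ)² + ħ a′(λ) + 2ħ Σ_{i=1}^M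 (a(λ) − a(μ_i))/(λ − μ_i). -/
open Finset

/-!
Algebraic Bethe ansatz for the rational sl₂ Gaudin model. On the set of points avoiding the
`ε j`, the operators `A, B, C` obey `[C(x), C(y)] = 0`, `[A(x), C(y)] = ħ (C(y) - C(x)) / (x - y)`
and `[B(x), C(y)] = 2ħ (A(x) - A(y)) / (x - y)`; these give
`[T(λ), C(μ)] = 2ħ (C(μ) A(λ) - C(λ) A(μ)) / (λ - μ)`. Pushing `T(λ)` through `C(μ_1) ⋯ C(μ_M)`
and using that `A(ν)` acts on partial Bethe vectors diagonally up to terms in which one `C(μ_i)`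
is replaced by `C(ν)`, one gets, off shell,
`T(λ) Ω = Λ(λ) Ω + Σ_i 2ħ β_i / (λ - μ_i) • (Ω - C(λ) Ω_i)`, where `Ω_i` omits `C(μ_i)` and
`β_i = a(μ_i) + Σ_{k ≠ i} ħ / (μ_i - μ_k)`. The Bethe equations say exactly `β_i = 0`.
-/

theorem lie_add_sum_smul_add_sum_smul {R L ι : Type*} [CommRing R] [LieRing L] [LieAlgebra R L]
    [Fintype ι] [DecidableEq ι] (Z W : L) (X Y : ι → L) (f g : ι → R)
    (hZY : ∀ k, ⁅Z, Y k⁆ = 0) (hXW : ∀ j, ⁅X j, W⁆ = 0)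
    (hXY : ∀ j k, j ≠ k → ⁅X j, Y k⁆ = 0) :
    ⁅Z + ∑ j, f j • X j, W + ∑ k, g k • Y k⁆ = ⁅Z, W⁆ + ∑ j, (f j * g j) • ⁅X j, Y j⁆ := by
  have hdiag : ∀ j, ⁅f j • X j, ∑ k, g k • Y k⁆ = (f j * g j) • ⁅X j, Y j⁆ := fun j => by
    rw [lie_sum, sum_eq_single j (fun k _ hk => by
        rw [lie_smul, smul_lie, hXY j k (Ne.symm hk), smul_zero, smul_zero]) (by simp),
      lie_smul, smul_lie, smul_smul, mul_comm]
  simp only [add_lie, lie_add, sum_lie, hdiag]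
  simp [lie_sum, lie_smul, smul_lie, hZY, hXW]

/-- `LieRing.ofAssociativeRing` is not a global instance, so the ring commutator needs its own
version. -/
theorem Ring.lie_add_sum_smul_add_sum_smul {𝕜 R ι : Type*} [CommRing 𝕜] [Ring R] [Algebra 𝕜 R]
    [Fintype ι] [DecidableEq ι] (Z W : R) (X Y : ι → R) (f g : ι → 𝕜)
    (hZY : ∀ k, Commute Z (Y k)) (hXW : ∀ j, Commute (X j) W)
    (hXY : ∀ j k, j ≠ k → Commute (X j) (Y k)) :
    ⁅Z + ∑ j, f j • X j, W + ∑ k, g k • Y k⁆ = ⁅Z, W⁆ + ∑ j, (f j * g j) • ⁅X j, Y j⁆ :=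
  let _ := LieRing.ofAssociativeRing (A := R)
  _root_.lie_add_sum_smul_add_sum_smul Z W X Y f g (fun k => (hZY k).lie_eq)
    (fun j => (hXW j).lie_eq) fun j k hjk => (hXY j k hjk).lie_eq

theorem sum_smul_sub {R M ι : Type*} [Semiring R] [AddCommGroup M] [Module R M] (s : Finset ι)
    (f : ι → R) (u : M) (w : ι → M) :
    ∑ i ∈ s, f i • (u - w i) = (∑ i ∈ s, f i) • u - ∑ i ∈ s, f i • w i := by
  simp only [smul_sub, sum_sub_distrib, sum_smul]

theorem sum_inv_sub_smul_sub_sum {𝕜 M ι : Type*} [Field 𝕜] [AddCommGroup M] [Module 𝕜 M]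
    [Fintype ι] {ε : ι → 𝕜} (X : ι → M) {x y : 𝕜} (hx : ∀ j, x ≠ ε j) (hy : ∀ j, y ≠ ε j) :
    ∑ j, (x - ε j)⁻¹ • X j - ∑ j, (y - ε j)⁻¹ • X j
      = (y - x) • ∑ j, ((x - ε j)⁻¹ * (y - ε j)⁻¹) • X j := by
  rw [← sum_sub_distrib, smul_sum]
  refine sum_congr rfl fun j _ => ?_
  have := sub_ne_zero.2 (hx j)
  have := sub_ne_zero.2 (hy j)
  rw [← sub_smul, smul_smul]
  congr 1
  field_simp
  ring

section GaudinAlgebra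

variable {𝕜 R : Type*} [Field 𝕜] [Ring R] [Algebra 𝕜 R]

structure IsGaudinTriple (hbar : 𝕜) (D : Set 𝕜) (A B C : 𝕜 → R) : Prop where
  commute_C : ∀ x ∈ D, ∀ y ∈ D, Commute (C x) (C y)
  lie_A_C : ∀ x ∈ D, ∀ y ∈ D, x ≠ y → ⁅A x, C y⁆ = (hbar / (x - y)) • (C y - C x)
  lie_B_C : ∀ x ∈ D, ∀ y ∈ D, x ≠ y → ⁅B x, C y⁆ = (2 * hbar / (x - y)) • (A x - A y)

/-- The operator `T(λ)` of the paper. -/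
def casimir (A B C : 𝕜 → R) (x : 𝕜) : R := A x ^ 2 + (1 / 2 : 𝕜) • (B x * C x + C x * B x)

variable {hbar : 𝕜} {D : Set 𝕜} {A B C : 𝕜 → R}

theorem IsGaudinTriple.A_mul_C (h : IsGaudinTriple hbar D A B C) {x y : 𝕜} (hx : x ∈ D)
    (hy : y ∈ D) (hxy : x ≠ y) : A x * C y = C y * A x + (hbar / (x - y)) • (C y - C x) :=
  sub_eq_iff_eq_add'.mp ((Ring.lie_def _ _).symm.trans (h.lie_A_C x hx y hy hxy))

theorem IsGaudinTriple.B_mul_C (h : IsGaudinTriple hbar D A B C) {x y : 𝕜} (hx : x ∈ D)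
    (hy : y ∈ D) (hxy : x ≠ y) : B x * C y = C y * B x + (2 * hbar / (x - y)) • (A x - A y) :=
  sub_eq_iff_eq_add'.mp ((Ring.lie_def _ _).symm.trans (h.lie_B_C x hx y hy hxy))

theorem IsGaudinTriple.casimir_mul_C [CharZero 𝕜] (h : IsGaudinTriple hbar D A B C) {x y : 𝕜}
    (hx : x ∈ D) (hy : y ∈ D) (hxy : x ≠ y) :
    casimir A B C x * C y
      = C y * casimir A B C x + (2 * hbar / (x - y)) • (C y * A x - C x * A y) := by
  have hyx : hbar / (y - x) = -(hbar / (x - y)) := by rw [← neg_sub, div_neg]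
  have e2 := h.A_mul_C hy hx hxy.symm
  rw [hyx] at e2
  have e1' : ∀ Z : R, A x * (C y * Z)
      = C y * (A x * Z) + (hbar / (x - y)) • (C y * Z - C x * Z) := fun Z => by
    rw [← mul_assoc, h.A_mul_C hx hy hxy, add_mul, smul_mul_assoc, sub_mul, mul_assoc]
  have e3' : ∀ Z : R, B x * (C y * Z)
      = C y * (B x * Z) + (2 * hbar / (x - y)) • (A x * Z - A y * Z) := fun Z => by
    rw [← mul_assoc, h.B_mul_C hx hy hxy, add_mul, smul_mul_assoc, sub_mul, mul_assoc]
  have e4' : ∀ Z : R, C x * (C y * Z) = C y * (C x * Z) := fun Z => by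
    rw [← mul_assoc, (h.commute_C x hx y hy).eq, mul_assoc]
  -- the terms `A x * C x` coming from `⁅A x ^ 2, C y⁆` and from `⁅B x * C x + C x * B x, C y⁆`
  -- cancel
  simp only [casimir, pow_two, add_mul, smul_mul_assoc, mul_add, mul_sub, smul_add, smul_sub,
    mul_assoc, h.A_mul_C hx hy hxy, e1', h.B_mul_C hx hy hxy, e3', (h.commute_C x hx y hy).eq, e4',
    e2, smul_smul, mul_smul_comm]
  module

end GaudinAlgebra

section BetheAnsatz

variable {𝕜 V ι : Type*} [Field 𝕜] [AddCommGroup V] [Module 𝕜 V]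

def betheVector (C : 𝕜 → Module.End 𝕜 V) (μ : ι → 𝕜) (v : V) (l : List ι) : V :=
  (l.map fun i => C (μ i)).prod v

/-- For `s` the roots other than `μ i` and `ν = μ i`, this is the left side of the `i`-th Bethe
equation. -/
def dressedEigenvalue (a : 𝕜 → 𝕜) (hbar : 𝕜) (μ : ι → 𝕜) (s : Finset ι) (ν : 𝕜) : 𝕜 :=
  a ν + ∑ k ∈ s, hbar / (ν - μ k)

def betheEigenvalue (τ a : 𝕜 → 𝕜) (hbar : 𝕜) (μ : ι → 𝕜) (s : Finset ι) (ν : 𝕜) : 𝕜 :=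
  τ ν + 2 * hbar * ∑ i ∈ s, (a ν - a (μ i)) / (ν - μ i)

variable {C : 𝕜 → Module.End 𝕜 V} {μ : ι → 𝕜} {v : V}

theorem betheVector_cons (x : ι) (l : List ι) :
    betheVector C μ v (x :: l) = C (μ x) (betheVector C μ v l) := by
  simp [betheVector]

variable [DecidableEq ι]

theorem betheVector_erase_cons {x i : ι} (hxi : x ≠ i) (l : List ι) :
    betheVector C μ v ((x :: l).erase i) = C (μ x) (betheVector C μ v (l.erase i)) := by
  rw [List.erase_cons_tail (by simpa using hxi), betheVector_cons]

theorem sum_smul_apply_betheVector_erase_cons {x : ι} {l : List ι} (hx : x ∉ l) (ν : 𝕜)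
    (f : ι → 𝕜) :
    ∑ i ∈ l.toFinset, f i • C ν (C (μ x) (betheVector C μ v (l.erase i)))
      = ∑ i ∈ l.toFinset, f i • C ν (betheVector C μ v ((x :: l).erase i)) :=
  sum_congr rfl fun i hi => by
    rw [betheVector_erase_cons (by rintro rfl; exact hx (List.mem_toFinset.mp hi))]

theorem sum_smul_apply_apply_betheVector_erase_cons {x : ι} {l : List ι} (hx : x ∉ l) {ν : 𝕜}
    (hcomm : Commute (C (μ x)) (C ν)) (f : ι → 𝕜) :
    ∑ i ∈ l.toFinset, f i • C (μ x) (C ν (betheVector C μ v (l.erase i)))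
      = ∑ i ∈ l.toFinset, f i • C ν (betheVector C μ v ((x :: l).erase i)) := by
  simp only [← Module.End.mul_apply, hcomm.eq]
  exact sum_smul_apply_betheVector_erase_cons hx ν f

theorem dressedEigenvalue_insert (a : 𝕜 → 𝕜) (hbar : 𝕜) {s : Finset ι} {x : ι} (hx : x ∉ s)
    (ν : 𝕜) :
    dressedEigenvalue a hbar μ (insert x s) ν
      = dressedEigenvalue a hbar μ s ν + hbar / (ν - μ x) := by
  rw [dressedEigenvalue, dressedEigenvalue, sum_insert hx]; ring

theorem dressedEigenvalue_insert_erase (a : 𝕜 → 𝕜) (hbar : 𝕜) {s : Finset ι} {x i : ι}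
    (hx : x ∉ s) (hxi : x ≠ i) (ν : 𝕜) :
    dressedEigenvalue a hbar μ ((insert x s).erase i) ν
      = dressedEigenvalue a hbar μ (s.erase i) ν + hbar / (ν - μ x) := by
  rw [erase_insert_of_ne hxi, dressedEigenvalue_insert a hbar fun h => hx (mem_of_mem_erase h)]

variable {hbar : 𝕜} {D : Set 𝕜} {A B : 𝕜 → Module.End 𝕜 V} {a : 𝕜 → 𝕜}

theorem casimir_apply_of_apply_eq_smul {x α β : 𝕜} (hAv : A x v = α • v) (hBv : B x v = 0)
    (hBCv : ⁅B x, C x⁆ v = β • v) : casimir A B C x v = (α ^ 2 + β / 2) • v := by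
  have hBC : B x (C x v) = β • v := by
    rw [← Module.End.mul_apply, ← sub_add_cancel (B x * C x) (C x * B x), ← Ring.lie_def]
    simp [hBCv, hBv]
  simp only [casimir, pow_two, LinearMap.add_apply, Module.End.mul_apply, LinearMap.smul_apply,
    hAv, map_smul, hBC, hBv, map_zero, add_zero, smul_smul, ← add_smul]
  congr 1; ring

theorem IsGaudinTriple.A_apply_betheVector (h : IsGaudinTriple hbar D A B C)
    (hAv : ∀ x ∈ D, A x v = a x • v) (hμD : ∀ i, μ i ∈ D) {l : List ι} (hl : l.Nodup)
    {ν : 𝕜} (hν : ν ∈ D) (hνl : ∀ i ∈ l, ν ≠ μ i) :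
    A ν (betheVector C μ v l) = dressedEigenvalue a hbar μ l.toFinset ν • betheVector C μ v l
      - ∑ i ∈ l.toFinset, (hbar / (ν - μ i)) • C ν (betheVector C μ v (l.erase i)) := by
  induction l with
  | nil => simp [betheVector, dressedEigenvalue, hAv ν hν]
  | cons x t ih =>
    obtain ⟨hxt, ht⟩ := List.nodup_cons.mp hl
    have hxt' : x ∉ t.toFinset := by simpa using hxt
    have hνx : ν ≠ μ x := hνl x List.mem_cons_self
    rw [betheVector_cons, ← Module.End.mul_apply, h.A_mul_C hν (hμD x) hνx, List.toFinset_cons,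
      dressedEigenvalue_insert a hbar hxt', sum_insert hxt', List.erase_cons_head]
    simp only [LinearMap.add_apply, Module.End.mul_apply, LinearMap.smul_apply,
      LinearMap.sub_apply, ih ht (fun i hi => hνl i (List.mem_cons_of_mem x hi)), map_sub, map_smul,
      map_sum, sum_smul_apply_apply_betheVector_erase_cons hxt (h.commute_C _ (hμD x) _ hν)]
    module

theorem IsGaudinTriple.casimir_apply_betheVector [CharZero 𝕜] (h : IsGaudinTriple hbar D A B C)
    {τ : 𝕜 → 𝕜} (hAv : ∀ x ∈ D, A x v = a x • v) (hTv : ∀ x ∈ D, casimir A B C x v = τ x • v)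
    (hμ : Function.Injective μ) (hμD : ∀ i, μ i ∈ D) {l : List ι} (hl : l.Nodup)
    {lam : 𝕜} (hlam : lam ∈ D) (hlaml : ∀ i ∈ l, lam ≠ μ i) :
    casimir A B C lam (betheVector C μ v l)
      = betheEigenvalue τ a hbar μ l.toFinset lam • betheVector C μ v l
        + ∑ i ∈ l.toFinset, (2 * hbar * dressedEigenvalue a hbar μ (l.toFinset.erase i) (μ i)
            / (lam - μ i)) • (betheVector C μ v l - C lam (betheVector C μ v (l.erase i))) := by
  induction l with
  | nil => simp [betheVector, betheEigenvalue, hTv lam hlam]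
  | cons x t ih =>
    obtain ⟨hxt, ht⟩ := List.nodup_cons.mp hl
    have hxt' : x ∉ t.toFinset := by simpa using hxt
    have hne : ∀ i ∈ t.toFinset, x ≠ i := fun i hi => by rintro rfl; exact hxt' hi
    have hlamt : ∀ i ∈ t, lam ≠ μ i := fun i hi => hlaml i (List.mem_cons_of_mem x hi)
    have hlamx : lam ≠ μ x := hlaml x List.mem_cons_self
    set k := 2 * hbar / (lam - μ x) with hk
    have hcoef : ∀ i ∈ t.toFinset,
        2 * hbar * dressedEigenvalue a hbar μ ((insert x t.toFinset).erase i) (μ i) / (lam - μ i)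
          = 2 * hbar * dressedEigenvalue a hbar μ (t.toFinset.erase i) (μ i) / (lam - μ i)
            + k * (hbar / (lam - μ i)) - k * (hbar / (μ x - μ i)) := fun i hi => by
      have hxi := hne i hi
      rw [dressedEigenvalue_insert_erase a hbar hxt' hxi, hk]
      have := sub_ne_zero.2 hlamx
      have := sub_ne_zero.2 (hlamt i (List.mem_toFinset.mp hi))
      have := sub_ne_zero.2 (hμ.ne hxi)
      have := sub_ne_zero.2 (hμ.ne hxi).symm
      field_simp
      ring
    conv_lhs => rw [betheVector_cons, ← Module.End.mul_apply, h.casimir_mul_C hlam (hμD x) hlamx]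
    simp only [LinearMap.add_apply, Module.End.mul_apply, LinearMap.smul_apply,
      LinearMap.sub_apply, ih ht hlamt, sum_smul_sub t.toFinset,
      h.A_apply_betheVector hAv hμD ht hlam hlamt,
      h.A_apply_betheVector hAv hμD ht (hμD x) fun i hi => hμ.ne (hne i (List.mem_toFinset.mpr hi)),
      map_add, map_sub, map_smul, map_sum,
      sum_smul_apply_apply_betheVector_erase_cons hxt (h.commute_C _ (hμD x) _ hlam),
      sum_smul_apply_betheVector_erase_cons hxt]
    rw [← betheVector_cons]
    conv_rhs => rw [List.toFinset_cons, sum_insert hxt', erase_insert hxt', List.erase_cons_head,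
      sum_congr rfl fun i hi => by rw [hcoef i hi]]
    simp only [add_smul, sub_smul, mul_smul, sum_add_distrib, sum_sub_distrib, ← smul_sum,
      sum_smul_sub]
    simp only [betheEigenvalue, dressedEigenvalue, sum_insert hxt', hk]
    module

end BetheAnsatz

section GaudinModel

variable {𝕜 R ι : Type*} [Field 𝕜] [Ring R] [Algebra 𝕜 R] [Fintype ι] [DecidableEq ι]

def gaudinA (ω g : 𝕜) (ε : ι → 𝕜) (sz : ι → R) (x : 𝕜) : R :=
  ((2 * x - ω) / g ^ 2) • 1 + ∑ j, (x - ε j)⁻¹ • sz j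

def gaudinLadder (g : 𝕜) (ε : ι → 𝕜) (b : R) (s : ι → R) (x : 𝕜) : R :=
  (2 / g) • b + ∑ j, (x - ε j)⁻¹ • s j

variable {hbar ω g : 𝕜} {ε : ι → 𝕜} {b bdag : R} {sz sp sm : ι → R}

theorem commute_gaudinLadder (hbs : ∀ j, Commute b (sp j))
    (hs : ∀ j k, j ≠ k → Commute (sp j) (sp k)) (x y : 𝕜) :
    Commute (gaudinLadder g ε b sp x) (gaudinLadder g ε b sp y) := by
  rw [commute_iff_lie_eq, gaudinLadder, gaudinLadder,
    Ring.lie_add_sum_smul_add_sum_smul _ _ _ _ _ _ (fun k => (hbs k).smul_left _)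
      (fun j => (hbs j).symm.smul_right _) hs]
  simp [Ring.lie_def]

theorem lie_gaudinA_gaudinLadder (hzp : ∀ j, sz j * sp j - sp j * sz j = hbar • sp j)
    (hbsz : ∀ j, Commute bdag (sz j)) (hzs : ∀ j k, j ≠ k → Commute (sz j) (sp k)) (x y : 𝕜) :
    ⁅gaudinA ω g ε sz x, gaudinLadder g ε bdag sp y⁆
      = hbar • ∑ j, ((x - ε j)⁻¹ * (y - ε j)⁻¹) • sp j := by
  rw [gaudinA, gaudinLadder, Ring.lie_add_sum_smul_add_sum_smul _ _ _ _ _ _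
    (fun k => ((Commute.one_left _).smul_left _)) (fun j => (hbsz j).symm.smul_right _) hzs]
  simp [Ring.lie_def, hzp, smul_sum, smul_smul, mul_comm]

theorem lie_gaudinLadder_gaudinLadder (hosc : b * bdag - bdag * b = hbar • 1)
    (hpm : ∀ j, sp j * sm j - sm j * sp j = (2 * hbar) • sz j) (hbsp : ∀ j, Commute b (sp j))
    (hbsm : ∀ j, Commute bdag (sm j)) (hms : ∀ j k, j ≠ k → Commute (sm j) (sp k)) (x y : 𝕜) :
    ⁅gaudinLadder g ε b sm x, gaudinLadder g ε bdag sp y⁆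
      = (4 * hbar / g ^ 2) • 1 - (2 * hbar) • ∑ j, ((x - ε j)⁻¹ * (y - ε j)⁻¹) • sz j := by
  rw [gaudinLadder, gaudinLadder, Ring.lie_add_sum_smul_add_sum_smul _ _ _ _ _ _
    (fun k => (hbsp k).smul_left _) (fun j => (hbsm j).symm.smul_right _) hms]
  have hbb : ⁅(2 / g) • b, (2 / g) • bdag⁆ = (4 * hbar / g ^ 2) • (1 : R) := by
    rw [Ring.lie_def, smul_mul_smul_comm, smul_mul_smul_comm, ← smul_sub, hosc, smul_smul]
    ring_nf
  have hms_self : ∀ j, ⁅sm j, sp j⁆ = -((2 * hbar) • sz j) := fun j => by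
    rw [Ring.lie_def, ← neg_sub, hpm]
  simp only [hbb, hms_self, smul_neg, sum_neg_distrib, smul_sum, smul_smul, ← sub_eq_add_neg,
    mul_comm (2 * hbar)]

theorem isGaudinTriple_gaudin (hosc : b * bdag - bdag * b = hbar • 1)
    (hpm : ∀ j, sp j * sm j - sm j * sp j = (2 * hbar) • sz j)
    (hzp : ∀ j, sz j * sp j - sp j * sz j = hbar • sp j)
    (hsites : ∀ j k, j ≠ k → ∀ X ∈ ({sz j, sp j, sm j} : Set R),
      ∀ Y ∈ ({sz k, sp k, sm k} : Set R), Commute X Y)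
    (hbspin : ∀ j, ∀ X ∈ ({sz j, sp j, sm j} : Set R), Commute b X ∧ Commute bdag X) :
    IsGaudinTriple hbar {x | ∀ j, x ≠ ε j} (gaudinA ω g ε sz) (gaudinLadder g ε b sm)
      (gaudinLadder g ε bdag sp) where
  commute_C x _ y _ := commute_gaudinLadder (fun j => (hbspin j _ (by simp)).2)
    (fun j k hjk => hsites j k hjk _ (by simp) _ (by simp)) x y
  lie_A_C x hx y hy hxy := by
    have := sub_ne_zero.2 hxy
    rw [lie_gaudinA_gaudinLadder hzp (fun j => (hbspin j _ (by simp)).2)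
      (fun j k hjk => hsites j k hjk _ (by simp) _ (by simp)), gaudinLadder, gaudinLadder,
      add_sub_add_left_eq_sub, ← neg_sub (∑ j, (x - ε j)⁻¹ • sp j),
      sum_inv_sub_smul_sub_sum sp hx hy, smul_neg, smul_smul, ← neg_smul]
    congr 1
    field_simp
    ring
  lie_B_C x hx y hy hxy := by
    have := sub_ne_zero.2 hxy
    rw [lie_gaudinLadder_gaudinLadder hosc hpm (fun j => (hbspin j _ (by simp)).1)
      (fun j => (hbspin j _ (by simp)).2) (fun j k hjk => hsites j k hjk _ (by simp) _ (by simp)),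
      gaudinA, gaudinA, add_sub_add_comm, sum_inv_sub_smul_sub_sum sz hx hy, ← sub_smul, smul_add,
      smul_smul, smul_smul]
    match_scalars <;> field_simp <;> ring

end GaudinModel

section GaudinVacuum

variable {𝕜 V ι : Type*} [Field 𝕜] [AddCommGroup V] [Module 𝕜 V] [Fintype ι]
  {hbar ω g : 𝕜} {ε : ι → 𝕜} {b bdag : Module.End 𝕜 V} {sz sp sm : ι → Module.End 𝕜 V}
  {v : V} {σ : ι → 𝕜}

theorem gaudinA_apply_eq_smul (hszv : ∀ j, sz j v = (-(hbar * σ j)) • v) (x : 𝕜) :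
    gaudinA ω g ε sz x v = ((2 * x - ω) / g ^ 2 - ∑ j, hbar * σ j / (x - ε j)) • v := by
  simp only [gaudinA, LinearMap.add_apply, LinearMap.smul_apply, Module.End.one_apply,
    LinearMap.sum_apply, hszv, smul_smul, ← sum_smul, ← add_smul, sub_eq_add_neg,
    ← sum_neg_distrib]
  congr 2
  refine sum_congr rfl fun j _ => ?_
  ring

theorem casimir_gaudin_apply_vacuum [DecidableEq ι] [CharZero 𝕜]
    (hosc : b * bdag - bdag * b = hbar • 1)
    (hpm : ∀ j, sp j * sm j - sm j * sp j = (2 * hbar) • sz j)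
    (hsites : ∀ j k, j ≠ k → ∀ X ∈ ({sz j, sp j, sm j} : Set (Module.End 𝕜 V)),
      ∀ Y ∈ ({sz k, sp k, sm k} : Set (Module.End 𝕜 V)), Commute X Y)
    (hbspin : ∀ j, ∀ X ∈ ({sz j, sp j, sm j} : Set (Module.End 𝕜 V)),
      Commute b X ∧ Commute bdag X)
    (hbv : b v = 0) (hsmv : ∀ j, sm j v = 0) (hszv : ∀ j, sz j v = (-(hbar * σ j)) • v) (x : 𝕜) :
    casimir (gaudinA ω g ε sz) (gaudinLadder g ε b sm) (gaudinLadder g ε bdag sp) x v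
      = (((2 * x - ω) / g ^ 2 - ∑ j, hbar * σ j / (x - ε j)) ^ 2
          + hbar * (2 / g ^ 2 + ∑ j, hbar * σ j / (x - ε j) ^ 2)) • v := by
  have hBv : gaudinLadder g ε b sm x v = 0 := by simp [gaudinLadder, hbv, hsmv]
  have hBCv : ⁅gaudinLadder g ε b sm x, gaudinLadder g ε bdag sp x⁆ v
      = (2 * hbar * (2 / g ^ 2 + ∑ j, hbar * σ j / (x - ε j) ^ 2)) • v := by
    rw [lie_gaudinLadder_gaudinLadder hosc hpm (fun j => (hbspin j _ (by simp)).1)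
      (fun j => (hbspin j _ (by simp)).2) (fun j k hjk => hsites j k hjk _ (by simp) _ (by simp))]
    simp only [LinearMap.sub_apply, LinearMap.smul_apply, Module.End.one_apply,
      LinearMap.sum_apply, hszv, smul_smul, ← sum_smul, ← sub_smul]
    congr 1
    simp only [mul_add, mul_sum, sub_eq_add_neg, ← sum_neg_distrib]
    congr 1
    · ring
    · refine sum_congr rfl fun j _ => ?_
      rw [div_eq_mul_inv, ← inv_pow]
      ring
  rw [casimir_apply_of_apply_eq_smul (gaudinA_apply_eq_smul hszv x) hBv hBCv]
  congr 1
  ring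

end GaudinVacuum

theorem bethe_eigenvector_general
    (V : Type*) [AddCommGroup V] [Module ℂ V]
    (n M : ℕ) (hbar g ω : ℂ)
    (ε : Fin n → ℂ)
    (b bdag : Module.End ℂ V) (sz sp sm : Fin n → Module.End ℂ V)
    (hosc : b * bdag - bdag * b = hbar • (1 : Module.End ℂ V))
    (hpm : ∀ j, sp j * sm j - sm j * sp j = (2 * hbar) • sz j)
    (hzp : ∀ j, sz j * sp j - sp j * sz j = hbar • sp j)
    (hsites : ∀ j k, j ≠ k →
      ∀ X ∈ ({sz j, sp j, sm j} : Set (Module.End ℂ V)),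
      ∀ Y ∈ ({sz k, sp k, sm k} : Set (Module.End ℂ V)), Commute X Y)
    (hbspin : ∀ j, ∀ X ∈ ({sz j, sp j, sm j} : Set (Module.End ℂ V)),
      Commute b X ∧ Commute bdag X)
    (A B C T : ℂ → Module.End ℂ V)
    (hA : ∀ lam, (∀ j, lam ≠ ε j) →
      A lam = ((2 * lam - ω) / g ^ 2) • (1 : Module.End ℂ V)
        + ∑ j, (lam - ε j)⁻¹ • sz j)
    (hB : ∀ lam, (∀ j, lam ≠ ε j) →
      B lam = (2 / g) • b + ∑ j, (lam - ε j)⁻¹ • sm j)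
    (hC : ∀ lam, (∀ j, lam ≠ ε j) →
      C lam = (2 / g) • bdag + ∑ j, (lam - ε j)⁻¹ • sp j)
    (hT : ∀ lam, T lam = A lam ^ 2 + ((1 : ℂ) / 2) • (B lam * C lam + C lam * B lam))
    (v : V) (σ : Fin n → ℂ)
    (hbv : b v = 0) (hsmv : ∀ j, sm j v = 0)
    (hszv : ∀ j, sz j v = (-(hbar * σ j)) • v)
    (a a' : ℂ → ℂ)
    (ha : ∀ lam, a lam = (2 * lam - ω) / g ^ 2 - ∑ j, hbar * σ j / (lam - ε j))
    (ha' : ∀ lam, a' lam = 2 / g ^ 2 + ∑ j, hbar * σ j / (lam - ε j) ^ 2)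
    (μ : Fin M → ℂ) (hμ : Function.Injective μ)
    (hμε : ∀ i j, μ i ≠ ε j)
    (bethe : ∀ i, a (μ i) + ∑ k ∈ Finset.univ.erase i, hbar / (μ i - μ k) = 0)
    (Ω : V) (hΩ : Ω = ((List.ofFn fun i => C (μ i)).prod) v) :
    ∀ lam : ℂ, (∀ j, lam ≠ ε j) → (∀ i, lam ≠ μ i) →
      T lam Ω
        = ((a lam) ^ 2 + hbar * a' lam
            + 2 * hbar * ∑ i, (a lam - a (μ i)) / (lam - μ i)) • Ω := by
  intro lam hlam hlamμ
  have hgaudin : IsGaudinTriple hbar {x | ∀ j, x ≠ ε j} (gaudinA ω g ε sz)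
      (gaudinLadder g ε b sm) (gaudinLadder g ε bdag sp) :=
    isGaudinTriple_gaudin hosc hpm hzp hsites hbspin
  have hAv : ∀ x ∈ {x | ∀ j, x ≠ ε j}, gaudinA ω g ε sz x v = a x • v := fun x _ => by
    rw [ha, gaudinA_apply_eq_smul hszv]
  have hTv : ∀ x ∈ {x | ∀ j, x ≠ ε j}, casimir (gaudinA ω g ε sz) (gaudinLadder g ε b sm)
      (gaudinLadder g ε bdag sp) x v = (a x ^ 2 + hbar * a' x) • v := fun x _ => by
    rw [ha, ha', casimir_gaudin_apply_vacuum hosc hpm hsites hbspin hbv hsmv hszv]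
  have hTlam : T lam = casimir (gaudinA ω g ε sz) (gaudinLadder g ε b sm)
      (gaudinLadder g ε bdag sp) lam := by
    rw [hT, hA lam hlam, hB lam hlam, hC lam hlam]; rfl
  have hΩ' : Ω = betheVector (gaudinLadder g ε bdag sp) μ v (List.finRange M) := by
    rw [hΩ, List.ofFn_eq_map, betheVector, List.map_congr_left fun i _ => hC (μ i) (hμε i)]; rfl
  rw [hTlam, hΩ', hgaudin.casimir_apply_betheVector hAv hTv hμ hμε (List.nodup_finRange M) hlam
    fun i _ => hlamμ i, List.toFinset_finRange, sum_eq_zero fun i _ => by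
      rw [show dressedEigenvalue a hbar μ (univ.erase i) (μ i) = 0 from bethe i]; simp, add_zero]
  rfl

/-- the Bethe vector `Ω = C(μ_1)⋯C(μ_M) v` is an eigenvector of
`T(λ)` with eigenvalue `Λ(λ) = a(λ)² + ħ a'(λ) + 2ħ Σ_i (a(λ)-a(μ_i))/(λ-μ_i)`,
provided the Bethe equations hold. -/
theorem bethe_eigenvector
    (V : Type*) [AddCommGroup V] [Module ℂ V]
    (n M : ℕ) (hbar g ω : ℂ) (hhbar : hbar ≠ 0) (hg : g ≠ 0)
    (ε : Fin n → ℂ) (hε : Function.Injective ε)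
    (b bdag : Module.End ℂ V) (sz sp sm : Fin n → Module.End ℂ V)
    (hosc : b * bdag - bdag * b = hbar • (1 : Module.End ℂ V))
    (hpm : ∀ j, sp j * sm j - sm j * sp j = (2 * hbar) • sz j)
    (hzp : ∀ j, sz j * sp j - sp j * sz j = hbar • sp j)
    (hzm : ∀ j, sz j * sm j - sm j * sz j = (-hbar) • sm j)
    (hsites : ∀ j k, j ≠ k →
      ∀ X ∈ ({sz j, sp j, sm j} : Set (Module.End ℂ V)),
      ∀ Y ∈ ({sz k, sp k, sm k} : Set (Module.End ℂ V)), Commute X Y)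
    (hbspin : ∀ j, ∀ X ∈ ({sz j, sp j, sm j} : Set (Module.End ℂ V)),
      Commute b X ∧ Commute bdag X)
    (A B C T : ℂ → Module.End ℂ V)
    (hA : ∀ lam, (∀ j, lam ≠ ε j) →
      A lam = ((2 * lam - ω) / g ^ 2) • (1 : Module.End ℂ V)
        + ∑ j, (lam - ε j)⁻¹ • sz j)
    (hB : ∀ lam, (∀ j, lam ≠ ε j) →
      B lam = (2 / g) • b + ∑ j, (lam - ε j)⁻¹ • sm j)
    (hC : ∀ lam, (∀ j, lam ≠ ε j) →
      C lam = (2 / g) • bdag + ∑ j, (lam - ε j)⁻¹ • sp j)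
    (hT : ∀ lam, T lam = A lam ^ 2 + ((1 : ℂ) / 2) • (B lam * C lam + C lam * B lam))
    (v : V) (σ : Fin n → ℂ)
    (hbv : b v = 0) (hsmv : ∀ j, sm j v = 0)
    (hszv : ∀ j, sz j v = (-(hbar * σ j)) • v)
    (a a' : ℂ → ℂ)
    (ha : ∀ lam, a lam = (2 * lam - ω) / g ^ 2 - ∑ j, hbar * σ j / (lam - ε j))
    (ha' : ∀ lam, a' lam = 2 / g ^ 2 + ∑ j, hbar * σ j / (lam - ε j) ^ 2)
    (μ : Fin M → ℂ) (hμ : Function.Injective μ)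
    (hμε : ∀ i j, μ i ≠ ε j)
    (bethe : ∀ i, a (μ i) + ∑ k ∈ Finset.univ.erase i, hbar / (μ i - μ k) = 0)
    (Ω : V) (hΩ : Ω = ((List.ofFn fun i => C (μ i)).prod) v) :
    ∀ lam : ℂ, (∀ j, lam ≠ ε j) → (∀ i, lam ≠ μ i) →
      T lam Ω
        = ((a lam) ^ 2 + hbar * a' lam
            + 2 * hbar * ∑ i, (a lam - a (μ i)) / (lam - μ i)) • Ω :=
  bethe_eigenvector_general V n M hbar g ω ε b bdag sz sp sm hosc hpm hzp hsites hbspin A B C T hA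
    hB hC hT v σ hbv hsmv hszv a a' ha ha' μ hμ hμε bethe Ω hΩ
end

section
/- Let λ_1, …, λ_n and ε_1, …, ε_n be complex numbers, each family pairwise distinct, with λ_j ≠ ε_k for all j, k. Let B be the n×n Cauchy matrix with entries B_{jk} = 1/(λ_j − ε_k), and set z_i = ∏_{j=1}^n (ε_i − λ_j) / ∏_{k≠i} (ε_i − ε_k). Then B is invertible and for each i: Σ_{j=1}^n (B⁻¹)_{ij} = −z_i. -/
open BigOperators Finset

open Polynomial

private noncomputable def Qpoly (n : ℕ) (ε : Fin n → ℂ) (c : Fin n → ℂ) : ℂ[X] :=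
  ∑ k, C (c k) * ∏ m ∈ Finset.univ.erase k, (X - C (ε m))

private lemma Qpoly_degree (n : ℕ) (ε : Fin n → ℂ) (c : Fin n → ℂ) :
    (Qpoly n ε c).degree < n := by
  apply lt_of_le_of_lt (Polynomial.degree_sum_le _ _)
  rw [Finset.sup_lt_iff (by exact_mod_cast WithBot.bot_lt_coe n)]
  intro k _
  rw [← smul_eq_C_mul]
  apply lt_of_le_of_lt (Polynomial.degree_smul_le _ _)
  rw [Polynomial.degree_prod]
  simp only [Polynomial.degree_X_sub_C]
  rw [Finset.sum_const, Finset.card_erase_of_mem (Finset.mem_univ k), Finset.card_univ,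
    Fintype.card_fin]
  have hn : 0 < n := k.pos
  have : ((n - 1 : ℕ) : WithBot ℕ) < (n : WithBot ℕ) := by
    exact_mod_cast Nat.sub_lt hn one_pos
  simpa using this

private lemma Qpoly_eval_eps (n : ℕ) (ε : Fin n → ℂ) (c : Fin n → ℂ) (i : Fin n) :
    (Qpoly n ε c).eval (ε i) = c i * ∏ m ∈ Finset.univ.erase i, (ε i - ε m) := by
  unfold Qpoly
  rw [Polynomial.eval_finset_sum, Finset.sum_eq_single i]
  · simp [Polynomial.eval_prod]
  · intro k _ hk
    rw [Polynomial.eval_mul, Polynomial.eval_prod]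
    have : ∏ m ∈ Finset.univ.erase k, Polynomial.eval (ε i) (X - C (ε m)) = 0 :=
      Finset.prod_eq_zero (Finset.mem_erase.mpr ⟨hk.symm, Finset.mem_univ i⟩) (by simp)
    rw [this, mul_zero]
  · simp

private lemma Qpoly_eval_any (n : ℕ) (ε : Fin n → ℂ) (c : Fin n → ℂ) (x : ℂ) :
    (Qpoly n ε c).eval x = ∑ k, c k * ∏ m ∈ Finset.univ.erase k, (x - ε m) := by
  unfold Qpoly
  rw [Polynomial.eval_finset_sum]
  simp [Polynomial.eval_prod]

/-- the Cauchy matrix `B_{jk} = 1/(λ_j - ε_k)` is invertible and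
the row sums of its inverse are `Σ_j (B⁻¹)_{ij} = -z_i` where
`z_i = Π_j (ε_i - λ_j) / Π_{k≠i} (ε_i - ε_k)`. -/
theorem cauchy_inverse_row_sums
    (n : ℕ) (lam ε : Fin n → ℂ)
    (hlam : Function.Injective lam) (hε : Function.Injective ε)
    (hlamε : ∀ j k, lam j ≠ ε k)
    (B : Matrix (Fin n) (Fin n) ℂ)
    (hB : ∀ j k, B j k = 1 / (lam j - ε k))
    (z : Fin n → ℂ)
    (hz : ∀ i, z i = (∏ j, (ε i - lam j)) / ∏ k ∈ Finset.univ.erase i, (ε i - ε k)) :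
    IsUnit B ∧ ∀ i, ∑ j, B⁻¹ i j = -z i := by
  rcases Nat.eq_zero_or_pos n with hn | hn
  · subst hn
    exact ⟨isUnit_of_subsingleton B, fun i => i.elim0⟩
  -- nonzero denominators
  have hεden : ∀ i, (∏ m ∈ Finset.univ.erase i, (ε i - ε m)) ≠ 0 := fun i =>
    Finset.prod_ne_zero_iff.mpr fun m hm => sub_ne_zero.mpr (fun h => (Finset.mem_erase.mp hm).1.symm (hε h))
  have hd : ∀ j k, lam j - ε k ≠ 0 := fun j k => sub_ne_zero.mpr (hlamε j k)
  have hdprod : ∀ j, (∏ k, (lam j - ε k)) ≠ 0 := fun j =>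
    Finset.prod_ne_zero_iff.mpr fun k _ => hd j k
  -- Step 1: polynomial identity
  set Pl : ℂ[X] := ∏ j, (X - C (lam j)) with hPl
  set Pe : ℂ[X] := ∏ k, (X - C (ε k)) with hPe
  have hPlmonic : Pl.Monic := monic_prod_of_monic _ _ fun j _ => monic_X_sub_C _
  have hPemonic : Pe.Monic := monic_prod_of_monic _ _ fun k _ => monic_X_sub_C _
  have hPldeg : Pl.degree = n := by
    rw [hPl, Polynomial.degree_prod]; simp
  have hPedeg : Pe.degree = n := by
    rw [hPe, Polynomial.degree_prod]; simp
  have key : Pl = Pe + Qpoly n ε z := by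
    apply Polynomial.eq_of_degree_sub_lt_of_eval_index_eq (v := ε) Finset.univ
      (fun a _ b _ h => hε h)
    · have h1 : (Pl - Pe).degree < n := by
        rw [← hPldeg]
        exact Polynomial.degree_sub_lt (hPldeg.trans hPedeg.symm) hPlmonic.ne_zero
          (hPlmonic.leadingCoeff.trans hPemonic.leadingCoeff.symm)
      have : Pl - (Pe + Qpoly n ε z) = (Pl - Pe) - Qpoly n ε z := by ring
      rw [this]
      apply lt_of_le_of_lt (Polynomial.degree_sub_le _ _)
      rw [max_lt_iff]
      simpa using ⟨h1, Qpoly_degree n ε z⟩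
    · intro i _
      rw [Polynomial.eval_add, Qpoly_eval_eps]
      have hPle : Pl.eval (ε i) = ∏ j, (ε i - lam j) := by
        rw [hPl, Polynomial.eval_prod]; simp
      have hPee : Pe.eval (ε i) = 0 := by
        rw [hPe, Polynomial.eval_prod]
        exact Finset.prod_eq_zero (Finset.mem_univ i) (by simp)
      rw [hPle, hPee, hz i, div_mul_cancel₀ _ (hεden i), zero_add]
  -- Step 2: B.mulVec (-z) = 1
  have hBz : ∀ j, ∑ k, B j k * (-z k) = 1 := by
    intro j
    have hevl : (0 : ℂ) = ∏ k, (lam j - ε k) + ∑ k, z k * ∏ m ∈ Finset.univ.erase k, (lam j - ε m) := by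
      have := congrArg (Polynomial.eval (lam j)) key
      rw [Polynomial.eval_add, Qpoly_eval_any] at this
      have hPl0 : Pl.eval (lam j) = 0 := by
        rw [hPl, Polynomial.eval_prod]
        exact Finset.prod_eq_zero (Finset.mem_univ j) (by simp)
      have hPee : Pe.eval (lam j) = ∏ k, (lam j - ε k) := by
        rw [hPe, Polynomial.eval_prod]; simp
      rw [hPl0, hPee] at this
      exact this
    have hterm : ∀ k, B j k * (-z k)
        = -(z k * ∏ m ∈ Finset.univ.erase k, (lam j - ε m)) / ∏ m, (lam j - ε m) := by
      intro k
      rw [hB j k, div_mul_eq_mul_div, one_mul, div_eq_div_iff (hd j k) (hdprod j),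
        ← Finset.mul_prod_erase (Finset.univ) _ (Finset.mem_univ k)]
      ring
    rw [Finset.sum_congr rfl fun k _ => hterm k]
    simp only [neg_div]
    rw [Finset.sum_neg_distrib, ← Finset.sum_div, neg_eq_iff_eq_neg, div_eq_iff (hdprod j)]
    linear_combination -hevl
  -- Step 3: invertibility
  have hdet : B.det ≠ 0 := by
    intro h0
    obtain ⟨v, hv, hBv⟩ := (Matrix.exists_mulVec_eq_zero_iff).mpr h0
    have hQv : Qpoly n ε v = 0 := by
      apply Polynomial.eq_zero_of_degree_lt_of_eval_index_eq_zero (v := lam) Finset.univ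
        (fun a _ b _ h => hlam h)
      · simpa using Qpoly_degree n ε v
      · intro j _
        rw [Qpoly_eval_any]
        have : ∀ k, v k * ∏ m ∈ Finset.univ.erase k, (lam j - ε m)
            = (B j k * v k) * ∏ m, (lam j - ε m) := by
          intro k
          rw [hB j k, ← Finset.mul_prod_erase (Finset.univ) _ (Finset.mem_univ k), one_div,
            mul_mul_mul_comm, inv_mul_cancel₀ (hd j k), one_mul]
        rw [Finset.sum_congr rfl fun k _ => this k, ← Finset.sum_mul]
        have : ∑ k, B j k * v k = 0 := congrFun hBv j
        rw [this, zero_mul]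
    apply hv
    funext i
    have := congrArg (Polynomial.eval (ε i)) hQv
    rw [Qpoly_eval_eps] at this
    simp only [Polynomial.eval_zero] at this
    exact (mul_eq_zero.mp this).resolve_right (hεden i)
  have hunit : IsUnit B := (Matrix.isUnit_iff_isUnit_det B).mpr (isUnit_iff_ne_zero.mpr hdet)
  refine ⟨hunit, fun i => ?_⟩
  have hmv : B.mulVec (fun k => -z k) = fun _ => 1 := by
    funext j
    simpa [Matrix.mulVec, dotProduct] using hBz j
  have : B⁻¹.mulVec (fun _ => (1:ℂ)) = fun k => -z k := by
    rw [← hmv, Matrix.mulVec_mulVec, Matrix.nonsing_inv_mul B (isUnit_iff_ne_zero.mpr hdet),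
      Matrix.one_mulVec]
  have := congrFun this i
  simpa [Matrix.mulVec, dotProduct] using this
end

section
/- Let λ_1, …, λ_n and ε_1, …, ε_n be complex numbers, each family pairwise distinct, with λ_j ≠ ε_k for all j, k. Let B be the n×n Cauchy matrix with entries B_{jk} = 1/(λ_j − ε_k), and set z_i = ∏_{j=1}^n (ε_i − λ_j) / ∏_{k≠i} (ε_i − ε_k). Then B is invertible and for all i ≠ k: Σ_{j=1}^n (B⁻¹)_{ij} (B_{jk})² = −(1/(ε_i − ε_k))·(z_i/z_k), while on the diagonal Σ_{j=1}^n (B⁻¹)_{ij} (B_{ji})² = −1/z_i − Σ_{k≠i} (1/(ε_i − ε_k))·(z_k/z_i). -/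
/-!
Write `Λ = ∏ⱼ (X - λⱼ)`, `Eᵢ = ∏_{k ≠ i} (X - εₖ)`, so that `zᵢ = Λ(εᵢ) / Eᵢ(εᵢ)`. The inverse of
`B` is `(B⁻¹)ᵢⱼ = -zᵢ Eᵢ(λⱼ) / Λ'(λⱼ)`, and every claim is an instance of the barycentric
identity `∑ⱼ P(λⱼ) / (Λ'(λⱼ) (x - λⱼ)) = P(x) / Λ(x)` for `deg P < n`. For `B⁻¹ B = 1` take
`P = zᵢ Eᵢ`. In a squared column `k ≠ i` the factor `λⱼ - εₖ` of `Eᵢ(λⱼ)` cancels one power,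
leaving `P = zᵢ Eᵢ / (X - εₖ)`. On the diagonal, Lagrange interpolation of `Λ - E` at the nodes
`εₖ` gives `Λ = (X - εᵢ) H + zᵢ Eᵢ` with `deg H < n`; since `Λ(λⱼ) = 0`, one may take `P = -H`.
-/

open Finset Polynomial

namespace Lagrange

variable {F : Type*} [Field F] {ι : Type*} {s t : Finset ι} {v : ι → F}

theorem degree_nodal_lt_of_ssubset (h : t ⊂ s) : (nodal t v).degree < #s := by
  rw [degree_nodal]
  exact_mod_cast card_lt_card h

theorem eval_nodal_ne_zero (hv : Function.Injective v) {i : ι} (hi : i ∉ t) :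
    (nodal t v).eval (v i) ≠ 0 :=
  eval_nodal_not_at_node fun _ hj h => hi (hv h ▸ hj)

variable [DecidableEq ι]

theorem sum_nodalWeight_mul_eval_div_sub (hvs : Set.InjOn v s) {P : F[X]} (hP : P.degree < #s)
    {x : F} (hx : ∀ i ∈ s, x ≠ v i) :
    ∑ i ∈ s, nodalWeight s v i * P.eval (v i) / (v i - x) = -(P.eval x / (nodal s v).eval x) := by
  have h := eval_interpolate_not_at_node (fun i => P.eval (v i)) hx
  rw [← eq_interpolate hvs hP] at h
  rw [h, mul_div_cancel_left₀ _ (eval_nodal_not_at_node hx), ← sum_neg_distrib]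
  refine sum_congr rfl fun i _ => ?_
  rw [← neg_sub x, div_neg, div_eq_mul_inv]
  ring

theorem nodal_eq_nodal_add_sum (u : ι → F) (hvs : Set.InjOn v s) :
    nodal s u = nodal s v
      + ∑ i ∈ s, C ((nodal s u).eval (v i) * nodalWeight s v i) * nodal (s.erase i) v := by
  have hdeg : (nodal s u - nodal s v).degree < #s := by
    rw [← degree_nodal (v := u)]
    exact degree_sub_lt_left (by rw [degree_nodal, degree_nodal]) nodal_ne_zero
      (by rw [nodal_monic.leadingCoeff, nodal_monic.leadingCoeff])
  rw [← sub_eq_iff_eq_add', eq_interpolate hvs hdeg,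
    interpolate_eq_nodalWeight_mul_nodal_div_X_sub_C]
  refine sum_congr rfl fun i hi => ?_
  rw [← nodal_erase_eq_nodal_div hi, eval_sub, eval_nodal_at_node hi, sub_zero, C_mul]
  ring

end Lagrange

open Lagrange

noncomputable section

variable {F : Type*} [Field F] {ι : Type*} [Fintype ι] [DecidableEq ι] (lam ε : ι → F)

def cauchyMatrix : Matrix ι ι F :=
  Matrix.of fun j k => (lam j - ε k)⁻¹

def cauchyWeight (i : ι) : F :=
  (nodal univ lam).eval (ε i) * nodalWeight univ ε i

def cauchyInv : Matrix ι ι F :=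
  Matrix.of fun i j =>
    -cauchyWeight lam ε i * nodalWeight univ lam j * (nodal (univ.erase i) ε).eval (lam j)

theorem cauchyWeight_eq_prod_div_prod (i : ι) :
    cauchyWeight lam ε i = (∏ j, (ε i - lam j)) / ∏ k ∈ univ.erase i, (ε i - ε k) := by
  rw [cauchyWeight, nodalWeight, eval_nodal, prod_inv_distrib, div_eq_mul_inv]

variable {lam ε}

theorem eval_nodal_eq_cauchyWeight_mul (hε : Function.Injective ε) (i : ι) :
    (nodal univ lam).eval (ε i) = cauchyWeight lam ε i * (nodal (univ.erase i) ε).eval (ε i) := by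
  rw [cauchyWeight, nodalWeight_eq_eval_nodal_erase_inv, mul_assoc,
    inv_mul_cancel₀ (eval_nodal_ne_zero hε (notMem_erase i univ)), mul_one]

theorem cauchyWeight_ne_zero (hε : Function.Injective ε) (hlamε : ∀ j k, lam j ≠ ε k) (i : ι) :
    cauchyWeight lam ε i ≠ 0 :=
  mul_ne_zero (eval_nodal_not_at_node fun j _ => (hlamε j i).symm)
    (nodalWeight_ne_zero hε.injOn (mem_univ i))

theorem nodal_eq_X_sub_C_mul_add (hε : Function.Injective ε) (i : ι) :
    nodal univ lam = (X - C (ε i)) * (nodal (univ.erase i) ε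
        + ∑ k ∈ univ.erase i, C (cauchyWeight lam ε k) * nodal ((univ.erase i).erase k) ε)
      + C (cauchyWeight lam ε i) * nodal (univ.erase i) ε := by
  have hsplit : ∀ k ∈ univ.erase i,
      nodal (univ.erase k) ε = (X - C (ε i)) * nodal ((univ.erase i).erase k) ε := by
    intro k hk
    rw [erase_right_comm]
    exact nodal_eq_mul_nodal_erase (mem_erase.2 ⟨(ne_of_mem_erase hk).symm, mem_univ i⟩)
  have h := nodal_eq_nodal_add_sum lam hε.injOn (s := univ)
  rw [nodal_eq_mul_nodal_erase (v := ε) (mem_univ i), ← add_sum_erase _ _ (mem_univ i),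
    sum_congr rfl fun k hk => by rw [hsplit k hk, mul_left_comm], ← mul_sum] at h
  rw [h]
  unfold cauchyWeight
  ring

theorem sum_cauchyInv_mul_inv_sub (hlam : Function.Injective lam) (i : ι) {x : F}
    (hx : ∀ j, x ≠ lam j) :
    ∑ j, cauchyInv lam ε i j * (lam j - x)⁻¹
      = cauchyWeight lam ε i * (nodal (univ.erase i) ε).eval x / (nodal univ lam).eval x := by
  have hdeg := degree_nodal_lt_of_ssubset (v := ε) (erase_ssubset (mem_univ i))
  rw [mul_div_assoc, ← neg_neg (_ * _), ← mul_neg, ← sum_nodalWeight_mul_eval_div_sub hlam.injOn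
    hdeg fun j _ => hx j, mul_sum, ← sum_neg_distrib]
  refine sum_congr rfl fun j _ => ?_
  simp only [cauchyInv, Matrix.of_apply, div_eq_mul_inv]
  ring

theorem cauchyInv_mul_cauchyMatrix (hlam : Function.Injective lam) (hε : Function.Injective ε)
    (hlamε : ∀ j k, lam j ≠ ε k) : cauchyInv lam ε * cauchyMatrix lam ε = 1 := by
  ext i k
  simp only [Matrix.mul_apply, cauchyMatrix, Matrix.of_apply]
  rw [sum_cauchyInv_mul_inv_sub hlam i fun j => (hlamε j k).symm, Matrix.one_apply]
  split_ifs with hik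
  · rw [hik, ← eval_nodal_eq_cauchyWeight_mul hε,
      div_self (eval_nodal_not_at_node fun j _ => (hlamε j k).symm)]
  · rw [eval_nodal_at_node (mem_erase.2 ⟨Ne.symm hik, mem_univ k⟩), mul_zero, zero_div]

theorem sum_cauchyInv_mul_inv_sub_sq (hlam : Function.Injective lam) (i : ι) {Q : F[X]}
    (hQ : Q.degree < Fintype.card ι) {x : F} (hx : ∀ j, x ≠ lam j)
    (hQx : ∀ j, (lam j - x) * Q.eval (lam j)
      = -(cauchyWeight lam ε i * (nodal (univ.erase i) ε).eval (lam j))) :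
    ∑ j, cauchyInv lam ε i j * ((lam j - x)⁻¹) ^ 2 = -(Q.eval x / (nodal univ lam).eval x) := by
  rw [← card_univ] at hQ
  rw [← sum_nodalWeight_mul_eval_div_sub hlam.injOn hQ fun j _ => hx j]
  refine sum_congr rfl fun j _ => ?_
  have hj : lam j - x ≠ 0 := sub_ne_zero.2 (hx j).symm
  simp only [cauchyInv, Matrix.of_apply]
  field_simp
  linear_combination -nodalWeight univ lam j * hQx j

theorem sum_cauchyInv_mul_cauchyMatrix_sq_of_ne (hlam : Function.Injective lam)
    (hε : Function.Injective ε) (hlamε : ∀ j k, lam j ≠ ε k) {i k : ι} (hik : i ≠ k) :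
    ∑ j, cauchyInv lam ε i j * cauchyMatrix lam ε j k ^ 2
      = -(ε i - ε k)⁻¹ * (cauchyWeight lam ε i / cauchyWeight lam ε k) := by
  have hEi : nodal (univ.erase i) ε = (X - C (ε k)) * nodal ((univ.erase i).erase k) ε :=
    nodal_eq_mul_nodal_erase (mem_erase.2 ⟨hik.symm, mem_univ k⟩)
  have hEk : nodal (univ.erase k) ε = (X - C (ε i)) * nodal ((univ.erase i).erase k) ε := by
    rw [erase_right_comm]
    exact nodal_eq_mul_nodal_erase (mem_erase.2 ⟨hik, mem_univ i⟩)
  have hdeg : (C (-cauchyWeight lam ε i) * nodal ((univ.erase i).erase k) ε).degree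
      < Fintype.card ι := by
    rw [← mem_degreeLT, ← smul_eq_C_mul]
    refine Submodule.smul_mem _ _ (mem_degreeLT.2 ?_)
    rw [← card_univ]
    exact degree_nodal_lt_of_ssubset ((erase_subset _ _).trans_ssubset (erase_ssubset (mem_univ i)))
  simp only [cauchyMatrix, Matrix.of_apply]
  rw [sum_cauchyInv_mul_inv_sub_sq hlam i hdeg (fun j => (hlamε j k).symm) fun j => by
      rw [hEi]; simp only [eval_mul, eval_sub, eval_X, eval_C]; ring,
    eval_nodal_eq_cauchyWeight_mul hε k, hEk]
  simp only [eval_mul, eval_sub, eval_X, eval_C]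
  have hEik := eval_nodal_ne_zero hε (notMem_erase k (univ.erase i))
  have hεik : ε i - ε k ≠ 0 := sub_ne_zero.2 (hε.ne hik)
  have hεki : ε k - ε i ≠ 0 := sub_ne_zero.2 (hε.ne hik.symm)
  have hzk := cauchyWeight_ne_zero hε hlamε k
  field_simp
  ring

theorem sum_cauchyInv_mul_cauchyMatrix_sq_self (hlam : Function.Injective lam)
    (hε : Function.Injective ε) (hlamε : ∀ j k, lam j ≠ ε k) (i : ι) :
    ∑ j, cauchyInv lam ε i j * cauchyMatrix lam ε j i ^ 2
      = -(cauchyWeight lam ε i)⁻¹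
        - ∑ k ∈ univ.erase i, (ε i - ε k)⁻¹ * (cauchyWeight lam ε k / cauchyWeight lam ε i) := by
  set H := nodal (univ.erase i) ε
    + ∑ k ∈ univ.erase i, C (cauchyWeight lam ε k) * nodal ((univ.erase i).erase k) ε with hH
  have hdeg : H.degree < Fintype.card ι := by
    have hsub : ∀ {t}, t ⊆ univ.erase i → nodal t ε ∈ degreeLT F (Fintype.card ι) := fun ht =>
      mem_degreeLT.2 (card_univ (α := ι) ▸
        degree_nodal_lt_of_ssubset (ht.trans_ssubset (erase_ssubset (mem_univ i))))
    refine mem_degreeLT.1 (add_mem (hsub subset_rfl) (sum_mem fun k _ => ?_))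
    rw [← smul_eq_C_mul]
    exact Submodule.smul_mem _ _ (hsub (erase_subset _ _))
  have hHlam : ∀ j, (lam j - ε i) * H.eval (lam j)
      = -(cauchyWeight lam ε i * (nodal (univ.erase i) ε).eval (lam j)) := by
    intro j
    have h := congrArg (eval (lam j)) (nodal_eq_X_sub_C_mul_add (lam := lam) hε i)
    rw [← hH, eval_nodal_at_node (mem_univ j)] at h
    simp only [eval_add, eval_mul, eval_sub, eval_X, eval_C] at h
    linear_combination -h
  simp only [cauchyMatrix, Matrix.of_apply]
  rw [sum_cauchyInv_mul_inv_sub_sq hlam i hdeg (fun j => (hlamε j i).symm) hHlam,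
    eval_nodal_eq_cauchyWeight_mul hε i]
  have hEi := eval_nodal_ne_zero hε (notMem_erase i univ)
  have hzi := cauchyWeight_ne_zero hε hlamε i
  have hterm : ∀ k ∈ univ.erase i, (ε i - ε k)⁻¹ * (cauchyWeight lam ε k / cauchyWeight lam ε i)
      = cauchyWeight lam ε k * (nodal ((univ.erase i).erase k) ε).eval (ε i)
        / (cauchyWeight lam ε i * (nodal (univ.erase i) ε).eval (ε i)) := by
    intro k hk
    have hεik : ε i - ε k ≠ 0 := sub_ne_zero.2 (hε.ne (ne_of_mem_erase hk).symm)
    have hEik : (nodal ((univ.erase i).erase k) ε).eval (ε i) ≠ 0 :=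
      eval_nodal_ne_zero hε fun h => notMem_erase i univ (mem_of_mem_erase h)
    rw [nodal_eq_mul_nodal_erase hk, eval_mul, eval_sub, eval_X, eval_C]
    field_simp
  rw [sum_congr rfl hterm, ← sum_div, hH]
  simp only [eval_add, eval_finsetSum, eval_mul, eval_C]
  field_simp
  ring

end

/-- the Cauchy matrix `B_{jk} = 1/(λ_j - ε_k)` is invertible, and
`Σ_j (B⁻¹)_{ij} (B_{jk})² = -(1/(ε_i-ε_k)) z_i/z_k` for `i ≠ k`, while
`Σ_j (B⁻¹)_{ij} (B_{ji})² = -1/z_i - Σ_{k≠i} (1/(ε_i-ε_k)) z_k/z_i`. -/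
theorem cauchy_inverse_square_sums
    (n : ℕ) (lam ε : Fin n → ℂ)
    (hlam : Function.Injective lam) (hε : Function.Injective ε)
    (hlamε : ∀ j k, lam j ≠ ε k)
    (B : Matrix (Fin n) (Fin n) ℂ)
    (hB : ∀ j k, B j k = 1 / (lam j - ε k))
    (z : Fin n → ℂ)
    (hz : ∀ i, z i = (∏ j, (ε i - lam j)) / ∏ k ∈ Finset.univ.erase i, (ε i - ε k)) :
    IsUnit B
    ∧ (∀ i k, i ≠ k →
        ∑ j, B⁻¹ i j * (B j k) ^ 2 = -(1 / (ε i - ε k)) * (z i / z k))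
    ∧ (∀ i, ∑ j, B⁻¹ i j * (B j i) ^ 2
        = -1 / z i - ∑ k ∈ Finset.univ.erase i, (1 / (ε i - ε k)) * (z k / z i)) := by
  obtain rfl : B = cauchyMatrix lam ε := Matrix.ext fun j k => (hB j k).trans (one_div _)
  obtain rfl : z = cauchyWeight lam ε :=
    funext fun i => (hz i).trans (cauchyWeight_eq_prod_div_prod lam ε i).symm
  have hleft := cauchyInv_mul_cauchyMatrix hlam hε hlamε
  rw [Matrix.inv_eq_left_inv hleft]
  refine ⟨(Matrix.isUnit_iff_isUnit_det _).2 (Matrix.isUnit_det_of_left_inverse hleft),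
    fun i k hik => ?_, fun i => ?_⟩
  · rw [sum_cauchyInv_mul_cauchyMatrix_sq_of_ne hlam hε hlamε hik, one_div]
  · simp only [sum_cauchyInv_mul_cauchyMatrix_sq_self hlam hε hlamε i, neg_div, one_div]
end

section
/- Let M and d be natural numbers with d ≤ M, and define ρ : ℝ → ℝ as the (M+1)-st derivative ρ(x) = (d/dx)^{M+1}[ e^{−x} x^{M−d} ]. Then ρ satisfies the ordinary differential equation x·ρ″(x) + (d + 2 + x)·ρ′(x) + (M + 2)·ρ(x) = 0 for all x ∈ ℝ. (This is the one-spin, n = 1, case of the Hermiticity conditions 𝒟ρ + 𝒟₀ρ = 0 with d = 2s.) -/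
/-- the function `ρ(x) = (d/dx)^{M+1}[e^{-x} x^{M-d}]` satisfies
the ODE `x ρ'' + (d + 2 + x) ρ' + (M + 2) ρ = 0`. -/
theorem measure_ode
    (M d : ℕ) (hd : d ≤ M)
    (ρ : ℝ → ℝ)
    (hρ : ρ = iteratedDeriv (M + 1) (fun x : ℝ => Real.exp (-x) * x ^ (M - d))) :
    ∀ x : ℝ,
      x * deriv (deriv ρ) x + ((d : ℝ) + 2 + x) * deriv ρ x + ((M : ℝ) + 2) * ρ x = 0 := by
  set k := M - d with hk
  set f : ℝ → ℝ := fun x => Real.exp (-x) * x ^ k with hfdef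
  have hf : ContDiff ℝ (⊤ : ℕ∞) f := by
    apply ContDiff.mul
    · exact Real.contDiff_exp.comp contDiff_neg
    · exact contDiff_id.pow k
  have hsm : ∀ n, ContDiff ℝ ((⊤ : ℕ∞) : WithTop ℕ∞) (iteratedDeriv n f) := by
    intro n
    rw [iteratedDeriv_eq_iterate]
    exact ContDiff.iterate_deriv n (hf.of_le (mod_cast le_top))
  have hD : ∀ n x, HasDerivAt (iteratedDeriv n f) (iteratedDeriv (n + 1) f x) x := by
    intro n x
    rw [iteratedDeriv_succ]
    exact ((hsm n).differentiable (by simp) x).hasDerivAt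
  -- base relation: x f' + (x - k) f = 0
  have hR : ∀ x : ℝ, x * iteratedDeriv 1 f x + (x - (k : ℝ)) * iteratedDeriv 0 f x = 0 := by
    intro x
    have hfx : HasDerivAt f (Real.exp (-x) * (-1) * x ^ k +
        Real.exp (-x) * ((k : ℝ) * x ^ (k - 1))) x := by
      exact (((Real.hasDerivAt_exp (-x)).comp x ((hasDerivAt_id x).neg)).mul
        (hasDerivAt_pow k x))
    have hpow : (k : ℝ) * x ^ (k - 1) * x = (k : ℝ) * x ^ k := by
      cases k with
      | zero => simp
      | succ m => push_cast [Nat.add_sub_cancel, pow_succ]; ring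
    rw [iteratedDeriv_one, iteratedDeriv_zero, hfx.deriv]
    simp only [hfdef]
    linear_combination Real.exp (-x) * hpow
  -- key induction
  have key : ∀ n, ∀ x : ℝ, x * iteratedDeriv (n + 2) f x +
      (x - (k : ℝ) + (n + 1)) * iteratedDeriv (n + 1) f x +
      ((n : ℝ) + 1) * iteratedDeriv n f x = 0 := by
    intro n
    induction n with
    | zero =>
      intro x
      have hA : HasDerivAt (fun y : ℝ => y * iteratedDeriv 1 f y +
          (y - (k : ℝ)) * iteratedDeriv 0 f y)
          ((1 * iteratedDeriv 1 f x + x * iteratedDeriv 2 f x) +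
            (1 * iteratedDeriv 0 f x + (x - (k : ℝ)) * iteratedDeriv 1 f x)) x := by
        exact ((hasDerivAt_id x).mul (hD 1 x)).add
          (((hasDerivAt_id x).sub_const _).mul (hD 0 x))
      have hA0 : HasDerivAt (fun y : ℝ => y * iteratedDeriv 1 f y +
          (y - (k : ℝ)) * iteratedDeriv 0 f y) 0 x := by
        have : (fun y : ℝ => y * iteratedDeriv 1 f y + (y - (k : ℝ)) * iteratedDeriv 0 f y)
            = fun _ => (0 : ℝ) := funext hR
        rw [this]; exact hasDerivAt_const x 0
      have := hA.unique hA0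
      push_cast
      linarith [this]
    | succ n ih =>
      intro x
      have hA : HasDerivAt (fun y : ℝ => y * iteratedDeriv (n + 2) f y +
          (y - (k : ℝ) + (n + 1)) * iteratedDeriv (n + 1) f y +
          ((n : ℝ) + 1) * iteratedDeriv n f y)
          (((1 * iteratedDeriv (n + 2) f x + x * iteratedDeriv (n + 3) f x) +
            (1 * iteratedDeriv (n + 1) f x +
              (x - (k : ℝ) + (n + 1)) * iteratedDeriv (n + 2) f x)) +
            ((n : ℝ) + 1) * iteratedDeriv (n + 1) f x) x := by
        refine HasDerivAt.add (HasDerivAt.add ?_ ?_) ?_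
        · exact (hasDerivAt_id x).mul (hD (n + 2) x)
        · have h1 : HasDerivAt (fun y : ℝ => y - (k : ℝ) + ((n : ℝ) + 1)) 1 x := by
            simpa using ((hasDerivAt_id x).sub_const (k : ℝ)).add_const ((n : ℝ) + 1)
          exact h1.mul (hD (n + 1) x)
        · exact (hD n x).const_mul _
      have hA0 : HasDerivAt (fun y : ℝ => y * iteratedDeriv (n + 2) f y +
          (y - (k : ℝ) + (n + 1)) * iteratedDeriv (n + 1) f y +
          ((n : ℝ) + 1) * iteratedDeriv n f y) 0 x := by
        have : (fun y : ℝ => y * iteratedDeriv (n + 2) f y +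
            (y - (k : ℝ) + (n + 1)) * iteratedDeriv (n + 1) f y +
            ((n : ℝ) + 1) * iteratedDeriv n f y) = fun _ => (0 : ℝ) := funext ih
        rw [this]; exact hasDerivAt_const x 0
      have h0 := hA.unique hA0
      push_cast at h0 ⊢
      linarith [h0]
  intro x
  have hmain := key (M + 1) x
  have hcast : ((k : ℕ) : ℝ) = (M : ℝ) - (d : ℝ) := by
    rw [hk]; push_cast [Nat.cast_sub hd]; ring
  have e1 : deriv ρ = iteratedDeriv (M + 2) f := by
    rw [hρ, ← iteratedDeriv_succ]
  have e2 : deriv (deriv ρ) = iteratedDeriv (M + 3) f := by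
    rw [e1, ← iteratedDeriv_succ]
  rw [e2, e1, hρ]
  rw [show M + 1 + 2 = M + 3 from rfl, show M + 1 + 1 = M + 2 from rfl, hcast] at hmain
  push_cast at hmain ⊢
  linear_combination hmain
end

section
/- Let ħ be a nonzero complex number, N a positive natural number, and μ_1, …, μ_M pairwise distinct complex numbers with μ_j ≠ ±iħ/2 for all j and μ_j − μ_k ≠ ±iħ for all j ≠ k, satisfying the XXX Bethe equations ((μ_j + iħ/2)/(μ_j − iħ/2))^N = ∏_{k≠j} (μ_j − μ_k + iħ)/(μ_j − μ_k − iħ) for every j. Set Q(λ) = ∏_{m=1}^M (λ − μ_m). Then the polynomial (λ + iħ/2)^N Q(λ − iħ) + (λ − iħ/2)^N Q(λ + iħ) is divisible by Q(λ) in ℂ[λ]; equivalently, there exists a polynomial t(λ) of degree N with leading coefficient 2 such that (λ + iħ/2)^N Q(λ − iħ) + (λ − iħ/2)^N Q(λ + iħ) = t(λ) Q(λ) (Baxter's equation). -/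
open BigOperators Finset Polynomial Complex

/-- the XXX Bethe equations imply Baxter's equation: with
`Q(λ) = Π_m (λ - μ_m)`, the polynomial
`(λ + iħ/2)^N Q(λ - iħ) + (λ - iħ/2)^N Q(λ + iħ)` equals `t(λ) Q(λ)` for a
polynomial `t` of degree `N` with leading coefficient `2`. -/
theorem xxx_baxter_equation
    (hbar : ℂ) (hhbar : hbar ≠ 0) (N : ℕ) (hN : 1 ≤ N)
    (M : ℕ) (μ : Fin M → ℂ) (hμ : Function.Injective μ)
    (hμ1 : ∀ j, μ j ≠ I * hbar / 2 ∧ μ j ≠ -(I * hbar / 2))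
    (hμ2 : ∀ j k, j ≠ k → μ j - μ k ≠ I * hbar ∧ μ j - μ k ≠ -(I * hbar))
    (bethe : ∀ j, ((μ j + I * hbar / 2) / (μ j - I * hbar / 2)) ^ N
      = ∏ k ∈ Finset.univ.erase j, (μ j - μ k + I * hbar) / (μ j - μ k - I * hbar))
    (Q : Polynomial ℂ) (hQ : Q = ∏ m, (X - C (μ m))) :
    ∃ t : Polynomial ℂ, t.degree = (N : ℕ) ∧ t.leadingCoeff = 2 ∧
      (X + C (I * hbar / 2)) ^ N * Q.comp (X - C (I * hbar))
        + (X - C (I * hbar / 2)) ^ N * Q.comp (X + C (I * hbar))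
      = t * Q := by
  set h : ℂ := I * hbar with hh
  set P : Polynomial ℂ := (X + C (h / 2)) ^ N * Q.comp (X - C h)
    + (X - C (h / 2)) ^ N * Q.comp (X + C h) with hP
  -- every μ j is a root of P
  have hroot : ∀ j, P.eval (μ j) = 0 := by
    intro j
    have hx1 : μ j - h / 2 ≠ 0 := sub_ne_zero.mpr (hμ1 j).1
    have hA : ∀ k ∈ Finset.univ.erase j, μ j - μ k - h ≠ 0 := by
      intro k hk
      exact sub_ne_zero.mpr (hμ2 j k (Ne.symm (Finset.ne_of_mem_erase hk))).1
    have hAne : (∏ k ∈ Finset.univ.erase j, (μ j - μ k - h)) ≠ 0 :=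
      Finset.prod_ne_zero_iff.mpr hA
    have E : (μ j + h / 2) ^ N * ∏ k ∈ Finset.univ.erase j, (μ j - μ k - h)
        = (∏ k ∈ Finset.univ.erase j, (μ j - μ k + h)) * (μ j - h / 2) ^ N := by
      have hb := bethe j
      rw [div_pow, Finset.prod_div_distrib] at hb
      exact (div_eq_div_iff (pow_ne_zero _ hx1) hAne).mp hb
    have e1 : P.eval (μ j)
        = (μ j + h / 2) ^ N * ∏ m, (μ j - h - μ m)
          + (μ j - h / 2) ^ N * ∏ m, (μ j + h - μ m) := by
      simp [hP, hQ, eval_prod]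
    have p1 : (∏ m ∈ Finset.univ.erase j, (μ j - h - μ m))
        = ∏ k ∈ Finset.univ.erase j, (μ j - μ k - h) :=
      Finset.prod_congr rfl fun k _ => by ring
    have p2 : (∏ m ∈ Finset.univ.erase j, (μ j + h - μ m))
        = ∏ k ∈ Finset.univ.erase j, (μ j - μ k + h) :=
      Finset.prod_congr rfl fun k _ => by ring
    rw [e1,
      ← Finset.mul_prod_erase Finset.univ (fun m => μ j - h - μ m) (Finset.mem_univ j),
      ← Finset.mul_prod_erase Finset.univ (fun m => μ j + h - μ m) (Finset.mem_univ j),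
      p1, p2]
    linear_combination (-h) * E
  -- Q divides P
  have hdvd : Q ∣ P := by
    rw [hQ]
    apply Finset.prod_dvd_of_coprime
    · intro a _ b _ hab
      exact Polynomial.isCoprime_X_sub_C_of_isUnit_sub
        (isUnit_iff_ne_zero.mpr (sub_ne_zero.mpr fun e => hab (hμ e)))
    · intro j _
      exact Polynomial.dvd_iff_isRoot.mpr (hroot j)
  -- degree bookkeeping
  have mQ : Q.Monic := by
    rw [hQ]; exact monic_prod_of_monic _ _ fun _ _ => monic_X_sub_C _
  have degQ : Q.natDegree = M := by
    rw [hQ, natDegree_prod_of_monic _ _ fun _ _ => monic_X_sub_C _]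
    simp
  have m1 : ((X + C (h / 2)) ^ N * Q.comp (X - C h)).Monic :=
    ((monic_X_add_C _).pow N).mul (mQ.comp_X_sub_C _)
  have m2 : ((X - C (h / 2)) ^ N * Q.comp (X + C h)).Monic :=
    ((monic_X_sub_C _).pow N).mul (mQ.comp_X_add_C _)
  have d1 : ((X + C (h / 2)) ^ N * Q.comp (X - C h)).natDegree = N + M := by
    rw [(((monic_X_add_C (h/2)).pow N)).natDegree_mul (mQ.comp_X_sub_C _),
      natDegree_pow, natDegree_X_add_C, natDegree_comp, natDegree_X_sub_C, degQ]
    ring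
  have d2 : ((X - C (h / 2)) ^ N * Q.comp (X + C h)).natDegree = N + M := by
    rw [(((monic_X_sub_C (h/2)).pow N)).natDegree_mul (mQ.comp_X_add_C _),
      natDegree_pow, natDegree_X_sub_C, natDegree_comp, natDegree_X_add_C, degQ]
    ring
  have hcoeff : P.coeff (N + M) = 2 := by
    rw [hP, coeff_add]
    have c1 : ((X + C (h / 2)) ^ N * Q.comp (X - C h)).coeff (N + M) = 1 := by
      rw [← d1]; exact m1.coeff_natDegree
    have c2 : ((X - C (h / 2)) ^ N * Q.comp (X + C h)).coeff (N + M) = 1 := by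
      rw [← d2]; exact m2.coeff_natDegree
    rw [c1, c2]; norm_num
  have hPne : P ≠ 0 := fun e => by simp [e] at hcoeff
  have hdegP : P.natDegree = N + M := by
    refine le_antisymm ?_ (le_natDegree_of_ne_zero (by rw [hcoeff]; norm_num))
    refine (natDegree_add_le _ _).trans ?_
    rw [d1, d2, max_self]
  obtain ⟨t, ht⟩ := hdvd
  have hQne : Q ≠ 0 := mQ.ne_zero
  have htne : t ≠ 0 := by
    rintro rfl; rw [mul_zero] at ht; exact hPne ht
  have hdeg : P.natDegree = Q.natDegree + t.natDegree := by
    rw [ht, natDegree_mul hQne htne]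
  have hnatt : t.natDegree = N := by omega
  refine ⟨t, ?_, ?_, ?_⟩
  · rw [degree_eq_natDegree htne, hnatt]
  · have : P.leadingCoeff = Q.leadingCoeff * t.leadingCoeff := by
      rw [ht, leadingCoeff_mul]
    rw [mQ.leadingCoeff, one_mul] at this
    rw [← this, leadingCoeff, hdegP, hcoeff]
  · rw [ht, mul_comm]
end

section
/- Let ħ be a nonzero complex number, N a natural number, and Q, t complex polynomials satisfying Baxter's equation for the spin-1/2 XXX chain: (λ + iħ/2)^N Q(λ − iħ) + (λ − iħ/2)^N Q(λ + iħ) = t(λ) Q(λ) as polynomials in λ. Assume Q(iħ/2) ≠ 0 and Q(−iħ/2) ≠ 0. Then λ^N divides the polynomial t(λ + iħ/2)·t(λ − iħ/2) − (λ² + ħ²)^N; i.e. the characteristic equation t(ε + iħ/2) t(ε − iħ/2) = (ħ² + ε²)^N + O(ε^N) holds. -/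
open Polynomial Complex

/-- from Baxter's equation for the spin-1/2 XXX chain, the
characteristic equation `t(ε+iħ/2) t(ε-iħ/2) = (ħ²+ε²)^N + O(ε^N)` follows,
i.e. `λ^N` divides `t(λ+iħ/2) t(λ-iħ/2) - (λ²+ħ²)^N`. -/
theorem xxx_characteristic_spin_half
    (hbar : ℂ) (hhbar : hbar ≠ 0) (N : ℕ)
    (Q t : Polynomial ℂ)
    (baxter : (X + C (I * hbar / 2)) ^ N * Q.comp (X - C (I * hbar))
        + (X - C (I * hbar / 2)) ^ N * Q.comp (X + C (I * hbar))
      = t * Q)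
    (hQp : Q.eval (I * hbar / 2) ≠ 0) (hQm : Q.eval (-(I * hbar / 2)) ≠ 0) :
    (X : Polynomial ℂ) ^ N ∣
      t.comp (X + C (I * hbar / 2)) * t.comp (X - C (I * hbar / 2))
        - (X ^ 2 + C (hbar ^ 2)) ^ N := by
  set a : ℂ := I * hbar / 2 with ha
  have e1 := congrArg (fun p : Polynomial ℂ => p.comp (X + C a)) baxter
  have e2 := congrArg (fun p : Polynomial ℂ => p.comp (X - C a)) baxter
  simp only [add_comp, sub_comp, mul_comp, pow_comp, X_comp, C_comp,
    comp_assoc, add_sub_cancel_right, sub_add_cancel] at e1 e2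
  have haa : a + a = I * hbar := by rw [ha]; ring
  have r1 : (X : Polynomial ℂ) + C a + C a = X + C (I * hbar) := by
    rw [add_assoc, ← C_add, haa]
  have r2 : (X : Polynomial ℂ) + C a - C (I * hbar) = X - C a := by
    rw [← haa, C_add]; ring
  have r3 : (X : Polynomial ℂ) + C a + C (I * hbar) = X + C (3 * a) := by
    rw [add_assoc, ← C_add, show a + I * hbar = 3 * a by rw [ha]; ring]
  have r4 : (X : Polynomial ℂ) - C a - C (I * hbar) = X - C (3 * a) := by
    rw [← haa, C_add, show (3:ℂ) * a = a + (a + a) by ring, C_add, C_add]; ring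
  have r5 : (X : Polynomial ℂ) - C a + C (I * hbar) = X + C a := by
    rw [← haa, C_add]; ring
  have r6 : (X : Polynomial ℂ) - C a - C a = X - C (I * hbar) := by
    rw [← haa, C_add]; ring
  rw [r1, r2, r3] at e1
  rw [r4, r5, r6] at e2
  set U : Polynomial ℂ := (X + C (I * hbar)) ^ N with hU
  set V : Polynomial ℂ := (X - C (I * hbar)) ^ N with hV
  set W : Polynomial ℂ := X ^ N with hW
  set PN : Polynomial ℂ := (X ^ 2 + C (hbar ^ 2)) ^ N with hPN
  set Qp := Q.comp (X + C a) with hQpd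
  set Qm := Q.comp (X - C a) with hQmd
  set Q3p := Q.comp (X + C (3 * a)) with hQ3p
  set Q3m := Q.comp (X - C (3 * a)) with hQ3m
  set T1 := t.comp (X + C a) with hT1
  set T2 := t.comp (X - C a) with hT2
  have hUV : U * V = PN := by
    rw [hU, hV, hPN, ← mul_pow]
    congr 1
    rw [show (hbar ^ 2 : ℂ) = -((I * hbar) ^ 2) by rw [mul_pow, I_sq]; ring,
      C_neg, C_pow]
    ring
  have key : (T1 * T2 - PN) * (Qp * Qm)
      = W * (U * Qm * Q3m + W * Q3p * Q3m + Q3p * V * Qp) := by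
    linear_combination (-(T2 * Qm)) * e1 - (U * Qm + W * Q3p) * e2
      + (Qm * Qp) * hUV
  have hdvd : W ∣ (T1 * T2 - PN) * (Qp * Qm) := ⟨_, key⟩
  have hQ0 : (Qp * Qm).eval 0 ≠ 0 := by
    simp only [eval_mul, hQpd, hQmd, eval_comp, eval_add, eval_sub, eval_X,
      eval_C, zero_add, zero_sub]
    exact mul_ne_zero hQp hQm
  have hnd : ¬ (X : Polynomial ℂ) ∣ Qp * Qm := by
    rw [X_dvd_iff, coeff_zero_eq_eval_zero]
    exact hQ0
  have hcop : IsCoprime W (Qp * Qm) :=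
    (Polynomial.prime_X.coprime_iff_not_dvd.mpr hnd).pow_left
  exact hcop.dvd_of_dvd_mul_right hdvd
end

section
/- Let ħ be a nonzero complex number, N a natural number, and Q, t complex polynomials satisfying Baxter's equation for the spin-1 XXX chain: (λ + iħ)^N Q(λ − iħ) + (λ − iħ)^N Q(λ + iħ) = t(λ) Q(λ) as polynomials in λ. Assume Q(0) ≠ 0, Q(iħ) ≠ 0 and Q(−iħ) ≠ 0. Then λ^N divides the polynomial t(λ + iħ)·t(λ)·t(λ − iħ) − (λ − iħ)^N (λ + 2iħ)^N t(λ − iħ) − (λ + iħ)^N (λ − 2iħ)^N t(λ + iħ); i.e. the degree-3 characteristic equation t(ε+iħ) t(ε) t(ε−iħ) = (ε−iħ)^N (ε+2iħ)^N t(ε−iħ) + (ε+iħ)^N (ε−2iħ)^N t(ε+iħ) + O(ε^N) holds. -/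
open Polynomial Complex

/-!
Shifting Baxter's equation by `±η` (where `η = iħ`) gives two more relations,
`t(λ ± η) Q(λ ± η) = (λ ± 2η)^N Q(λ) + λ^N Q(λ ± 2η)`. Modulo `λ^N` they say that
`t(λ + η) Q(λ + η) ≡ (λ + 2η)^N Q` and `t(λ - η) Q(λ - η) ≡ (λ - 2η)^N Q`; substituting these
and Baxter's equation itself shows that the characteristic combination times
`Q(λ) Q(λ + η) Q(λ - η)` vanishes modulo `λ^N`; as this factor does not vanish at `0` and `λ`
is prime, `λ^N` divides the combination itself.
-/

theorem Polynomial.X_pow_dvd_of_dvd_mul_of_eval_zero_ne_zero {R : Type*} [CommRing R]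
    [IsDomain R] {f P : R[X]} (n : ℕ) (hP : P.eval 0 ≠ 0) (h : X ^ n ∣ f * P) : X ^ n ∣ f := by
  refine prime_X.pow_dvd_of_dvd_mul_right n ?_ h
  rwa [X_dvd_iff, coeff_zero_eq_eval_zero]

theorem dvd_mul_of_shifted_relations {S : Type*} [CommRing S]
    {x a b c d Q qp qm t tp tm u v : S}
    (shift_up : a * Q + x * u = tp * qp) (base : b * qm + c * qp = t * Q)
    (shift_down : x * v + d * Q = tm * qm) :
    x ∣ (tp * t * tm - c * a * tm - b * d * tp) * (Q * qp * qm) :=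
  ⟨c * qp * tm * qm * u + b * qm * tp * qp * v, by
    linear_combination (-(tp * qp * tm * qm)) * base - c * qp * tm * qm * shift_up
      - b * qm * tp * qp * shift_down⟩

def BaxterEquation {R : Type*} [CommRing R] (η : R) (N : ℕ) (Q t : R[X]) : Prop :=
  (X + C η) ^ N * Q.comp (X - C η) + (X - C η) ^ N * Q.comp (X + C η) = t * Q

namespace BaxterEquation

variable {R : Type*} [CommRing R] {η : R} {N : ℕ} {Q t : R[X]}

theorem comp (baxter : BaxterEquation η N Q t) (p : R[X]) :
    (p + C η) ^ N * Q.comp (p - C η) + (p - C η) ^ N * Q.comp (p + C η)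
      = t.comp p * Q.comp p := by
  simpa only [add_comp, sub_comp, mul_comp, pow_comp, comp_assoc, X_comp, C_comp]
    using congrArg (·.comp p) baxter

theorem shift_up (baxter : BaxterEquation η N Q t) :
    (X + C (2 * η)) ^ N * Q + X ^ N * Q.comp (X + C (2 * η))
      = t.comp (X + C η) * Q.comp (X + C η) := by
  have h2η : X + C η + C η = X + C (2 * η) := by rw [two_mul, C_add, add_assoc]
  have h := baxter.comp (X + C η)
  rwa [add_sub_cancel_right, comp_X, h2η] at h

theorem shift_down (baxter : BaxterEquation η N Q t) :
    X ^ N * Q.comp (X - C (2 * η)) + (X - C (2 * η)) ^ N * Q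
      = t.comp (X - C η) * Q.comp (X - C η) := by
  have h2η : X - C η - C η = X - C (2 * η) := by rw [two_mul, C_add, sub_sub]
  have h := baxter.comp (X - C η)
  rwa [sub_add_cancel, comp_X, h2η] at h

theorem X_pow_dvd_characteristic [IsDomain R] (baxter : BaxterEquation η N Q t)
    (hQ0 : Q.eval 0 ≠ 0) (hQp : Q.eval η ≠ 0) (hQm : Q.eval (-η) ≠ 0) :
    (X : R[X]) ^ N ∣
      t.comp (X + C η) * t * t.comp (X - C η)
        - (X - C η) ^ N * (X + C (2 * η)) ^ N * t.comp (X - C η)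
        - (X + C η) ^ N * (X - C (2 * η)) ^ N * t.comp (X + C η) := by
  have hP : (Q * Q.comp (X + C η) * Q.comp (X - C η)).eval 0 ≠ 0 := by
    simpa only [eval_mul, eval_comp, eval_add, eval_sub, eval_X, eval_C, zero_add, zero_sub]
      using mul_ne_zero (mul_ne_zero hQ0 hQp) hQm
  exact X_pow_dvd_of_dvd_mul_of_eval_zero_ne_zero N hP <|
    dvd_mul_of_shifted_relations baxter.shift_up baxter baxter.shift_down

end BaxterEquation

theorem xxx_characteristic_spin_one_general
    (hbar : ℂ) (N : ℕ)
    (Q t : Polynomial ℂ)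
    (baxter : (X + C (I * hbar)) ^ N * Q.comp (X - C (I * hbar))
        + (X - C (I * hbar)) ^ N * Q.comp (X + C (I * hbar))
      = t * Q)
    (hQ0 : Q.eval 0 ≠ 0) (hQp : Q.eval (I * hbar) ≠ 0) (hQm : Q.eval (-(I * hbar)) ≠ 0) :
    (X : Polynomial ℂ) ^ N ∣
      t.comp (X + C (I * hbar)) * t * t.comp (X - C (I * hbar))
        - (X - C (I * hbar)) ^ N * (X + C (2 * I * hbar)) ^ N * t.comp (X - C (I * hbar))
        - (X + C (I * hbar)) ^ N * (X - C (2 * I * hbar)) ^ N * t.comp (X + C (I * hbar)) := by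
  rw [mul_assoc 2 I hbar]
  exact BaxterEquation.X_pow_dvd_characteristic baxter hQ0 hQp hQm

/-- from Baxter's equation for the spin-1 XXX chain, the degree-3
characteristic equation
`t(ε+iħ) t(ε) t(ε-iħ) = (ε-iħ)^N (ε+2iħ)^N t(ε-iħ) + (ε+iħ)^N (ε-2iħ)^N t(ε+iħ) + O(ε^N)`
follows, i.e. `λ^N` divides the stated combination. -/
theorem xxx_characteristic_spin_one
    (hbar : ℂ) (hhbar : hbar ≠ 0) (N : ℕ)
    (Q t : Polynomial ℂ)
    (baxter : (X + C (I * hbar)) ^ N * Q.comp (X - C (I * hbar))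
        + (X - C (I * hbar)) ^ N * Q.comp (X + C (I * hbar))
      = t * Q)
    (hQ0 : Q.eval 0 ≠ 0) (hQp : Q.eval (I * hbar) ≠ 0) (hQm : Q.eval (-(I * hbar)) ≠ 0) :
    (X : Polynomial ℂ) ^ N ∣
      t.comp (X + C (I * hbar)) * t * t.comp (X - C (I * hbar))
        - (X - C (I * hbar)) ^ N * (X + C (2 * I * hbar)) ^ N * t.comp (X - C (I * hbar))
        - (X + C (I * hbar)) ^ N * (X - C (2 * I * hbar)) ^ N * t.comp (X + C (I * hbar)) :=
  xxx_characteristic_spin_one_general hbar N Q t baxter hQ0 hQp hQm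
end
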